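/- arXiv:1603.06695 — 8 statements merged into one kernel-verified Lean document; each statement's English description precedes it below -/
import Mathlib

section
/- For every function f : ℕ → ℕ and all d ≥ 1, r ≥ 1 there exists R such that every f-limited colouring C : {0,...,R}^d → ℕ^r admits x_1 < x_2 < ... < x_{d+1} ≤ R with C(x_1,...,x_d) ≤ C(x_2,...,x_{d+1}) coordinatewise (the finite adjacent Ramsey theorem AR_f). -/
/-!
Compactness reduces the theorem to its infinite version. If every `R` had a bad `f`-limited
colouring `C_R`, then, since `C_R x` is bounded independently of `R ≥ max x`, an ultrafilter
refining `atTop` yields a limit colouring `D` of all of `ℕ^d`. The infinite adjacent Ramsey theorem,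
which follows from the infinite Ramsey theorem and the well-foundedness of `ℕ`, gives
`x₁ < … < x_{d+1}` with `D(x₁,…,x_d) ≤ D(x₂,…,x_{d+1})`, and `C_R` agrees with `D` at these two
points for some `R ≥ x_{d+1}`.
-/

/-- Tower function: `tower 0 i = i`, `tower (n+1) i = 2 ^ tower n i`. -/
def tower : ℕ → ℕ → ℕ
  | 0, i => i
  | n+1, i => 2 ^ tower n i

/-- `ARProp f d r R` : every `f`-limited colouring `C : {0,…,R}^d → ℕ^r` admits
`x₁ < … < x_{d+1} ≤ R` with `C(x₁,…,x_d) ≤ C(x₂,…,x_{d+1})` coordinatewise. -/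
def ARProp (f : ℕ → ℕ) (d r R : ℕ) : Prop :=
  ∀ C : (Fin d → ℕ) → (Fin r → ℕ),
    (∀ x : Fin d → ℕ, (∀ i, x i ≤ R) → ∀ j, C x j ≤ f (Finset.univ.sup x) + 1) →
    ∃ x : Fin (d+1) → ℕ, StrictMono x ∧ x (Fin.last d) ≤ R ∧
      ∀ j, C (fun i => x i.castSucc) j ≤ C (fun i => x i.succ) j

/-- `ARnum f d r` : the least `R` witnessing the adjacent Ramsey theorem `AR_f^d(r)`. -/
noncomputable def ARnum (f : ℕ → ℕ) (d r : ℕ) : ℕ := sInf {R | ARProp f d r R}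

def IsHomogeneous {κ : Type*} {m : ℕ} (c : (Fin m → ℕ) → κ) (T : Set ℕ) : Prop :=
  ∃ t, ∀ x : Fin m → ℕ, StrictMono x → (∀ k, x k ∈ T) → c x = t

section Ramsey

variable {κ : Type*} {m : ℕ}

theorem isHomogeneous_of_fin_zero (c : (Fin 0 → ℕ) → κ) (T : Set ℕ) : IsHomogeneous c T :=
  ⟨c Fin.elim0, fun _ _ _ => congrArg c (Subsingleton.elim _ _)⟩

theorem exists_subset_isHomogeneous_cons
    (ih : ∀ (c : (Fin m → ℕ) → κ) {S : Set ℕ}, S.Infinite →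
      ∃ T ⊆ S, T.Infinite ∧ IsHomogeneous c T)
    (c : (Fin (m + 1) → ℕ) → κ) (S : {S : Set ℕ // S.Infinite}) :
    ∃ T : {S : Set ℕ // S.Infinite}, T.1 ⊆ S.1 \ Set.Iic (sInf S.1) ∧
      IsHomogeneous (fun y => c (Fin.cons (sInf S.1) y)) T.1 :=
  let ⟨T, hTS, hT, hhom⟩ := ih (fun y => c (Fin.cons (sInf S.1) y)) (S.2.sdiff (Set.finite_Iic _))
  ⟨⟨T, hT⟩, hTS, hhom⟩

theorem exists_subset_isHomogeneous_succ [Finite κ]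
    (ih : ∀ (c : (Fin m → ℕ) → κ) {S : Set ℕ}, S.Infinite →
      ∃ T ⊆ S, T.Infinite ∧ IsHomogeneous c T)
    (c : (Fin (m + 1) → ℕ) → κ) {S : Set ℕ} (hS : S.Infinite) :
    ∃ T ⊆ S, T.Infinite ∧ IsHomogeneous c T := by
  choose next hnext_sub t ht using exists_subset_isHomogeneous_cons ih c
  obtain ⟨seq, hseq_zero, hseq_succ⟩ : ∃ seq : ℕ → {S : Set ℕ // S.Infinite},
      seq 0 = ⟨S, hS⟩ ∧ ∀ i, seq (i + 1) = next (seq i) :=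
    ⟨fun i => next^[i] ⟨S, hS⟩, rfl, fun i => Function.iterate_succ_apply' _ _ _⟩
  set a : ℕ → ℕ := fun i => sInf (seq i).1
  have ha_mem (i : ℕ) : a i ∈ (seq i).1 := Nat.sInf_mem (seq i).2.nonempty
  have hseq_sub (i : ℕ) : (seq (i + 1)).1 ⊆ (seq i).1 \ Set.Iic (a i) :=
    hseq_succ i ▸ hnext_sub (seq i)
  have hseq_anti : Antitone fun i => (seq i).1 :=
    antitone_nat_of_succ_le fun i => (hseq_sub i).trans Set.sdiff_subset
  have ha : StrictMono a :=
    strictMono_nat_of_lt_succ fun i => not_le.mp (hseq_sub i (ha_mem (i + 1))).2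
  -- `(a i, y)` has colour `t (seq i)` for increasing `y` in `seq (i + 1)`, and `seq (i + 1)`
  -- contains every `a j` with `j > i`.
  obtain ⟨t₀, hfiber⟩ := Finite.exists_infinite_fiber fun i => t (seq i)
  refine ⟨a '' (fun i => t (seq i)) ⁻¹' {t₀}, ?_, ?_, t₀, fun x hx hxT => ?_⟩
  · rintro _ ⟨i, -, rfl⟩
    simpa [hseq_zero] using hseq_anti (Nat.zero_le i) (ha_mem i)
  · exact (Set.infinite_coe_iff.mp hfiber).image ha.injective.injOn
  · obtain ⟨i, hi, hxi⟩ := hxT 0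
    have htail (k : Fin m) : Fin.tail x k ∈ (seq (i + 1)).1 := by
      obtain ⟨j, -, hxj⟩ := hxT k.succ
      have hij : i < j := ha.lt_iff_lt.mp (hxi ▸ hxj ▸ hx (Fin.succ_pos k))
      rw [Fin.tail, ← hxj]
      exact hseq_anti hij (ha_mem j)
    rw [← Fin.cons_self_tail x, ← hxi, ← hi]
    exact ht (seq i) _ (hx.comp Fin.strictMono_succ) (hseq_succ i ▸ htail)

theorem Set.Infinite.exists_subset_isHomogeneous [Finite κ] (c : (Fin m → ℕ) → κ) {S : Set ℕ}
    (hS : S.Infinite) : ∃ T ⊆ S, T.Infinite ∧ IsHomogeneous c T := by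
  induction m generalizing S with
  | zero => exact ⟨S, subset_rfl, hS, isHomogeneous_of_fin_zero c S⟩
  | succ m ih => exact exists_subset_isHomogeneous_succ (fun c _ hS => ih c hS) c hS

end Ramsey

section AdjacentRamsey

variable {ι α : Type*} [Finite ι] [LinearOrder α] [WellFoundedLT α]

/-- Colour `y` by the set of coordinates that strictly decrease from `y ∘ castSucc` to `y ∘ succ`.
On an infinite homogeneous set this colour is empty, since otherwise one coordinate would strictly
decrease along the consecutive windows. -/
theorem exists_strictMono_adjacent_le {d : ℕ} (D : (Fin d → ℕ) → ι → α) :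
    ∃ x : Fin (d + 1) → ℕ, StrictMono x ∧
      ∀ j, D (fun i => x i.castSucc) j ≤ D (fun i => x i.succ) j := by
  let c : (Fin (d + 1) → ℕ) → Set ι := fun y =>
    {j | D (fun i => y i.succ) j < D (fun i => y i.castSucc) j}
  obtain ⟨T, -, hT, t, ht⟩ := Set.infinite_univ.exists_subset_isHomogeneous c
  set g : ℕ → ℕ := Nat.nth (· ∈ T)
  have hg : StrictMono g := Nat.nth_strictMono hT
  have hgT (n : ℕ) : g n ∈ T := Nat.nth_mem_of_infinite hT n
  rcases t.eq_empty_or_nonempty with rfl | ⟨j, hj⟩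
  · have hx : StrictMono fun i : Fin (d + 1) => g i := hg.comp Fin.val_strictMono
    have hempty := ht _ hx fun _ => hgT _
    exact ⟨_, hx, fun j => not_lt.mp fun hlt => (Set.ext_iff.mp hempty j).mp hlt⟩
  · refine (not_strictAnti_of_wellFoundedLT (fun n => D (fun i : Fin d => g (n + i)) j)
      (strictAnti_nat_of_succ_lt fun n => ?_)).elim
    have hwindow : c (fun i : Fin (d + 1) => g (n + i)) = t :=
      ht _ (hg.comp fun _ _ h => Nat.add_lt_add_left h n) fun _ => hgT _
    have hdec := (Set.ext_iff.mp hwindow j).mpr hj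
    simp only [c, Set.mem_ofPred_eq, Fin.val_succ, Fin.val_castSucc, ← add_assoc] at hdec
    simpa only [add_right_comm n] using hdec

end AdjacentRamsey

theorem adjacent_ramsey_general (f : ℕ → ℕ) (d r : ℕ) :
    ∃ R, ARProp f d r R := by
  by_contra! hbad
  simp only [ARProp, not_forall, not_exists, not_and, exists_prop] at hbad
  choose C hlim hbad using hbad
  let U : Ultrafilter ℕ := Ultrafilter.of Filter.atTop
  have hU {p : ℕ → Prop} (hp : ∀ᶠ R in Filter.atTop, p R) : ∀ᶠ R in U, p R :=
    Ultrafilter.of_le _ hp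
  have hlimit (x : Fin d → ℕ) (j : Fin r) : ∃ v, ∀ᶠ R in U, C R x j = v := by
    have hbdd : ∀ᶠ R in U, ∃ v ∈ Set.Iic (f (Finset.univ.sup x) + 1), C R x j = v :=
      hU <| (Filter.eventually_ge_atTop (Finset.univ.sup x)).mono fun R hR =>
        ⟨_, hlim R x (fun i => (Finset.le_sup (Finset.mem_univ i)).trans hR) j, rfl⟩
    obtain ⟨v, -, hv⟩ := (Ultrafilter.eventually_exists_mem_iff (Set.finite_Iic _)).mp hbdd
    exact ⟨v, hv⟩
  choose D hD using hlimit
  obtain ⟨x, hx, hxD⟩ := exists_strictMono_adjacent_le D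
  obtain ⟨R, hR, hinit, htail⟩ := ((hU (Filter.eventually_ge_atTop (x (Fin.last d)))).and
    ((Filter.eventually_all.mpr fun j => hD _ j).and
      (Filter.eventually_all.mpr fun j => hD _ j))).exists
  obtain ⟨j, hj⟩ := hbad R x hx hR
  exact hj ((hinit j).trans_le ((hxD j).trans (htail j).symm.le))

/-- The finite adjacent Ramsey theorem `AR_f`. -/
theorem adjacent_ramsey (f : ℕ → ℕ) (d r : ℕ) (hd : 1 ≤ d) (hr : 1 ≤ r) :
    ∃ R, ARProp f d r R :=
  adjacent_ramsey_general f d r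
end

section
/- For every function f : ℕ → ℕ and all d ≥ 1, r ≥ 1, m there exists R such that every colouring C : [m,R]^d → {0,...,r-1} admits a homogeneous set H ⊆ {m,...,R} with |H| ≥ f(min H) (the Paris–Harrington theorem PH_f). -/
/-- `PHProp f d m r R` : every colouring of the `d`-element subsets of `{m,…,R}` with
`r` colours admits a homogeneous `H ⊆ {m,…,R}` with `|H| ≥ f(min H)`. -/
def PHProp (f : ℕ → ℕ) (d m r R : ℕ) : Prop :=
  ∀ C : Finset ℕ → ℕ,
    (∀ s ⊆ Finset.Icc m R, s.card = d → C s < r) →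
    ∃ H : Finset ℕ, H ⊆ Finset.Icc m R ∧ H.Nonempty ∧ f (sInf (H : Set ℕ)) ≤ H.card ∧
      ∀ s ⊆ H, ∀ t ⊆ H, s.card = d → t.card = d → C s = C t

/-- `PHnum f d m r` : the least `R` witnessing the Paris–Harrington theorem `PH_f^d(m,r)`. -/
noncomputable def PHnum (f : ℕ → ℕ) (d m r : ℕ) : ℕ := sInf {R | PHProp f d m r R}

/-- The infinite Ramsey theorem: every `r`-colouring of the `d`-element subsets of an
infinite set `S ⊆ ℕ` has an infinite homogeneous subset. -/
lemma infinite_ramsey (d : ℕ) : ∀ (r : ℕ) (S : Set ℕ), S.Infinite →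
    ∀ C : Finset ℕ → ℕ, (∀ s : Finset ℕ, ↑s ⊆ S → s.card = d → C s < r) →
    ∃ T, T ⊆ S ∧ T.Infinite ∧ ∃ c : ℕ,
      ∀ s : Finset ℕ, ↑s ⊆ T → s.card = d → C s = c := by
  induction d with
  | zero =>
    intro r S hS C _
    refine ⟨S, subset_rfl, hS, C ∅, ?_⟩
    intro s _ hcard
    rw [Finset.card_eq_zero] at hcard
    subst hcard; rfl
  | succ d ih =>
    intro r S hS C hC
    have key : ∀ T : {T : Set ℕ // T.Infinite ∧ T ⊆ S},
        ∃ T' : {T : Set ℕ // T.Infinite ∧ T ⊆ S}, ∃ c : ℕ,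
          (T' : Set ℕ) ⊆ (T : Set ℕ) \ {sInf (T : Set ℕ)} ∧
          ∀ s : Finset ℕ, ↑s ⊆ (T' : Set ℕ) → s.card = d →
            C (insert (sInf (T : Set ℕ)) s) = c := by
      rintro ⟨T, hTinf, hTS⟩
      set a := sInf T with ha
      have haT : a ∈ T := Nat.sInf_mem hTinf.nonempty
      have hT' : (T \ {a}).Infinite := hTinf.diff (Set.finite_singleton a)
      have hC' : ∀ s : Finset ℕ, ↑s ⊆ T \ {a} → s.card = d →
          C (insert a s) < r := by
        intro s hs hcard
        have hanotin : a ∉ s := fun hmem => (hs hmem).2 rfl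
        apply hC
        · rw [Finset.coe_insert]
          exact Set.insert_subset (hTS haT) (hs.trans (Set.diff_subset.trans hTS))
        · rw [Finset.card_insert_of_notMem hanotin, hcard]
      obtain ⟨T'', hT''sub, hT''inf, c, hc⟩ :=
        ih r (T \ {a}) hT' (fun s => C (insert a s)) hC'
      exact ⟨⟨T'', hT''inf, hT''sub.trans (Set.diff_subset.trans hTS)⟩, c, hT''sub, hc⟩
    choose F col hsub hcol using key
    let A : ℕ → {T : Set ℕ // T.Infinite ∧ T ⊆ S} := fun n => F^[n] ⟨S, hS, subset_rfl⟩
    have hAsucc : ∀ n, A (n+1) = F (A n) := fun n => Function.iterate_succ_apply' F n _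
    set a : ℕ → ℕ := fun n => sInf (A n : Set ℕ) with ha
    have hstep : ∀ n, (A (n+1) : Set ℕ) ⊆ (A n : Set ℕ) \ {a n} := by
      intro n; rw [hAsucc n]; exact hsub (A n)
    have hmono : ∀ n k, n ≤ k → (A k : Set ℕ) ⊆ (A n : Set ℕ) := by
      intro n k h
      induction h with
      | refl => exact subset_rfl
      | step h ihk => exact ((hstep _).trans Set.diff_subset).trans ihk
    have haA : ∀ n, a n ∈ (A n : Set ℕ) := fun n => Nat.sInf_mem (A n).2.1.nonempty
    have hamono : StrictMono a := by
      apply strictMono_nat_of_lt_succ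
      intro n
      have h1 := hstep n (haA (n+1))
      exact lt_of_le_of_ne (Nat.sInf_le h1.1) (fun h => h1.2 (Set.mem_singleton_iff.mpr h.symm))
    have hcval : ∀ n, col (A n) < r := by
      intro n
      obtain ⟨s, hsA, hscard⟩ := (A (n+1)).2.1.exists_subset_card_eq d
      have hs' : ↑s ⊆ (F (A n) : Set ℕ) := by rw [← hAsucc n]; exact hsA
      have heq := hcol (A n) s hs' hscard
      rw [← heq]
      have hsub2 : ↑s ⊆ (A n : Set ℕ) \ {a n} := (hstep n).trans' hsA
      have hanotin : a n ∉ s := fun hmem => (hsub2 hmem).2 rfl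
      apply hC
      · rw [Finset.coe_insert]
        exact Set.insert_subset ((A n).2.2 (haA n)) (hsub2.trans (Set.diff_subset.trans (A n).2.2))
      · rw [Finset.card_insert_of_notMem hanotin, hscard]
    have hr : 0 < r := Nat.pos_of_ne_zero (fun h => by simpa [h] using hcval 0)
    let cf : ℕ → Fin r := fun n => ⟨col (A n), hcval n⟩
    obtain ⟨c0, hc0⟩ := Finite.exists_infinite_fiber cf
    have hI : (cf ⁻¹' {c0}).Infinite := Set.infinite_coe_iff.mp hc0
    refine ⟨a '' (cf ⁻¹' {c0}), ?_, ?_, (c0 : ℕ), ?_⟩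
    · rintro x ⟨n, _, rfl⟩
      exact (A n).2.2 (haA n)
    · exact hI.image (Set.injOn_of_injective hamono.injective)
    · intro s hsT hscard
      have hne : s.Nonempty := Finset.card_pos.mp (by omega)
      set x := s.min' hne with hx
      have hxs : x ∈ s := s.min'_mem hne
      obtain ⟨n0, hn0I, hn0⟩ := hsT hxs
      have herase : ↑(s.erase x) ⊆ (A (n0+1) : Set ℕ) := by
        intro y hy
        rw [Finset.coe_erase] at hy
        obtain ⟨hys, hyx⟩ := hy
        obtain ⟨k, hkI, hk⟩ := hsT hys
        have hlt : n0 < k := by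
          have h1 : a n0 ≤ a k := by rw [hn0, hk]; exact s.min'_le y hys
          have h2 : a n0 ≠ a k := by rw [hn0, hk]; exact fun h => hyx (h ▸ rfl)
          exact hamono.lt_iff_lt.mp (lt_of_le_of_ne h1 h2)
        rw [← hk]
        exact hmono (n0+1) k hlt (haA k)
      have herase' : ↑(s.erase x) ⊆ (F (A n0) : Set ℕ) := by
        rw [← hAsucc n0]; exact herase
      have hcarde : (s.erase x).card = d := by
        rw [Finset.card_erase_of_mem hxs, hscard]
        omega
      have := hcol (A n0) (s.erase x) herase' hcarde
      have hxa : sInf (A n0 : Set ℕ) = x := hn0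
      rw [hxa, Finset.insert_erase hxs] at this
      rw [this]
      have : cf n0 = c0 := hn0I
      exact congrArg Fin.val this

/-- The Paris–Harrington theorem `PH_f`. -/
theorem paris_harrington (f : ℕ → ℕ) (d r m : ℕ) (hd : 1 ≤ d) (hr : 1 ≤ r) :
    ∃ R, PHProp f d m r R := by
  by_contra hcon
  push_neg at hcon
  have hbad : ∀ R, ∃ C : Finset ℕ → ℕ,
      (∀ s ⊆ Finset.Icc m R, s.card = d → C s < r) ∧
      ¬ ∃ H : Finset ℕ, H ⊆ Finset.Icc m R ∧ H.Nonempty ∧ f (sInf (H : Set ℕ)) ≤ H.card ∧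
        ∀ s ⊆ H, ∀ t ⊆ H, s.card = d → t.card = d → C s = C t := by
    intro R
    have h := hcon R
    unfold PHProp at h
    push_neg at h
    obtain ⟨C, hC1, hC2⟩ := h
    refine ⟨C, hC1, ?_⟩
    rintro ⟨H, h1, h2, h3, h4⟩
    obtain ⟨s, hs1, t, ht1, hs2, ht2, hne⟩ := hC2 H h1 h2 h3
    exact hne (h4 s hs1 t ht1 hs2 ht2)
  choose Cb hCb1 hCb2 using hbad
  set U : Ultrafilter ℕ := Filter.hyperfilter ℕ with hU
  have hlim : ∀ s : Finset ℕ, ∃ c : ℕ,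
      ((↑s : Set ℕ) ⊆ Set.Ici m ∧ s.card = d) →
      (c < r ∧ {R | Cb R s = c} ∈ U) := by
    intro s
    by_cases hyp : (↑s : Set ℕ) ⊆ Set.Ici m ∧ s.card = d
    · obtain ⟨hsm, hscard⟩ := hyp
      have hne : s.Nonempty := Finset.card_pos.mp (by omega)
      set M := s.max' hne with hM
      have hcof : {R | M ≤ R} ∈ U := by
        apply Filter.mem_hyperfilter_of_finite_compl
        have : {R | M ≤ R}ᶜ ⊆ Set.Iio M := by
          intro R hR
          simp only [Set.mem_compl_iff, Set.mem_setOf_eq, not_le] at hR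
          exact hR
        exact (Set.finite_Iio M).subset this
      have hsubU : {R | M ≤ R} ⊆ ⋃ c ∈ Set.Iio r, {R | Cb R s = c} := by
        intro R hR
        have hsIcc : s ⊆ Finset.Icc m R := by
          intro x hx
          rw [Finset.mem_Icc]
          exact ⟨hsm hx, le_trans (s.le_max' x hx) hR⟩
        have := hCb1 R s hsIcc hscard
        exact Set.mem_biUnion this rfl
      have hUnion : (⋃ c ∈ Set.Iio r, {R | Cb R s = c}) ∈ U :=
        Filter.mem_of_superset hcof hsubU
      rw [Ultrafilter.finite_biUnion_mem_iff (Set.finite_Iio r)] at hUnion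
      obtain ⟨c, hc1, hc2⟩ := hUnion
      exact ⟨c, fun _ => ⟨hc1, hc2⟩⟩
    · exact ⟨0, fun h => absurd h hyp⟩
  choose CL hCL using hlim
  obtain ⟨T, hTS, hTinf, c, hc⟩ := infinite_ramsey d r (Set.Ici m) (Set.Ici_infinite m) CL
    (fun s hs hcard => (hCL s ⟨hs, hcard⟩).1)
  set a := sInf T with haT
  have haTmem : a ∈ T := Nat.sInf_mem hTinf.nonempty
  set n := max (f a) 1 with hn
  obtain ⟨t, htT, htcard⟩ := (hTinf.diff (Set.finite_singleton a)).exists_subset_card_eq (n - 1)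
  have hanott : a ∉ t := fun hmem => (htT hmem).2 rfl
  set H' : Finset ℕ := insert a t with hH'
  have hH'card : H'.card = n := by
    rw [hH', Finset.card_insert_of_notMem hanott, htcard]
    omega
  have hH'T : (↑H' : Set ℕ) ⊆ T := by
    rw [hH', Finset.coe_insert]
    exact Set.insert_subset haTmem (htT.trans Set.diff_subset)
  have haH' : a ∈ H' := Finset.mem_insert_self a t
  have hInf : sInf (↑H' : Set ℕ) = a := by
    apply le_antisymm
    · exact Nat.sInf_le haH'
    · have hmem : sInf (↑H' : Set ℕ) ∈ (↑H' : Set ℕ) := Nat.sInf_mem ⟨a, haH'⟩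
      exact Nat.sInf_le (hH'T hmem)
  have hH'ne : H'.Nonempty := ⟨a, haH'⟩
  set M := H'.max' hH'ne with hM
  -- Find a single R agreeing with the limit colouring on all `d`-subsets of `H'`
  have hG : ((⋂ s ∈ H'.powersetCard d, {R | Cb R s = CL s}) ∩ {R | M ≤ R}) ∈ U := by
    apply Filter.inter_mem
    · rw [Filter.biInter_finset_mem]
      intro s hs
      rw [Finset.mem_powersetCard] at hs
      exact (hCL s ⟨(Finset.coe_subset.mpr hs.1).trans (hH'T.trans hTS), hs.2⟩).2
    · apply Filter.mem_hyperfilter_of_finite_compl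
      have : {R | M ≤ R}ᶜ ⊆ Set.Iio M := fun R hR => by
        simp only [Set.mem_compl_iff, Set.mem_setOf_eq, not_le] at hR; exact hR
      exact (Set.finite_Iio M).subset this
  obtain ⟨R', hR'⟩ := Filter.nonempty_of_mem hG
  obtain ⟨hR'1, hR'2⟩ := hR'
  apply hCb2 R'
  refine ⟨H', ?_, hH'ne, ?_, ?_⟩
  · intro x hx
    rw [Finset.mem_Icc]
    exact ⟨hTS (hH'T hx), le_trans (H'.le_max' x hx) hR'2⟩
  · rw [hInf, hH'card]
    exact le_max_left _ _
  · intro s hs u hu hscard hucard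
    have key : ∀ v ⊆ H', v.card = d → Cb R' v = c := by
      intro v hv hvcard
      have hvmem : v ∈ H'.powersetCard d := Finset.mem_powersetCard.mpr ⟨hv, hvcard⟩
      have h1 : Cb R' v = CL v := Set.mem_iInter₂.mp hR'1 v hvmem
      rw [h1]
      exact hc v ((Finset.coe_subset.mpr hv).trans hH'T) hvcard
    rw [key s hs hscard, key u hu hucard]
end

section
/- For every d ≥ 1, every c ≥ 1 and every i ≥ 2 there exists a colouring C : {0,...,2_d(i^c)}^{d+1} → {0,...,i}^{32·d+c} such that C(x_1,...,x_{d+1}) ≠ C(x_2,...,x_{d+2}) for all x_1 < x_2 < ... < x_{d+2} ≤ 2_d(i^c). -/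
/-!
The colouring is the Erdős–Hajnal stepping-up colouring, iterated. Colour a pair `a ≠ b` by the
position of the highest bit in which `a` and `b` differ, together with the order bit `a < b`. Equal
colours on `(a, b)` and `(b, c)` force `a < b < c` or `a > b > c` and a common top differing
position `p`; but then the bit of `b` at `p` is `1` as seen from one pair and `0` as seen from the
other. So colouring a `(k+1)`-tuple by the pair of colours of its two `k`-subtuples turns a
colouring that separates adjacent `k`-tuples into one that separates adjacent `(k+1)`-tuples, and
shrinks `2 ^ M` colours to about `2 * M`. Starting from the identity on `{0, …, 2_d(M)}`, `d`
rounds leave at most `2 * M + 4` colours; with `M = i ^ c` these are written with `32 * d + c`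
digits in base `i + 1`.
-/

namespace Nat

lemma testBit_log2_xor_of_lt {a b : ℕ} (h : a < b) :
    a.testBit (a ^^^ b).log2 = false ∧ b.testBit (a ^^^ b).log2 = true := by
  have hne : a ^^^ b ≠ 0 := xor_ne_zero_iff.2 h.ne
  have hp : (a ^^^ b).testBit (a ^^^ b).log2 = true := testBit_log2 hne
  have hhigh : ∀ j, (a ^^^ b).log2 < j → b.testBit j = a.testBit j := fun j hj => by
    have : (a ^^^ b).testBit j = false := testBit_lt_two_pow ((log2_lt hne).1 hj)
    exact (by simpa [testBit_xor] using this : a.testBit j = b.testBit j).symm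
  rw [testBit_xor] at hp
  generalize (a ^^^ b).log2 = p at hp hhigh ⊢
  cases ha : a.testBit p <;> cases hb : b.testBit p <;> simp [ha, hb] at hp ⊢
  exact absurd (lt_of_testBit p hb ha hhigh) h.not_gt

lemma eq_of_div_pow_mod_eq {b n u v : ℕ} (hu : u < b ^ n) (hv : v < b ^ n)
    (h : ∀ j < n, u / b ^ j % b = v / b ^ j % b) : u = v := by
  have := finFunctionFinEquiv.symm.injective (a₁ := ⟨u, hu⟩) (a₂ := ⟨v, hv⟩) <| funext fun j =>
    Fin.ext <| by simpa [finFunctionFinEquiv_symm_apply_val] using h j j.isLt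
  exact congrArg Fin.val this

end Nat

def topDiffColor (a b : ℕ) : ℕ :=
  2 * (a ^^^ b).log2 + if a < b then 1 else 0

lemma topDiffColor_ne {a b c : ℕ} (hab : a ≠ b) (hbc : b ≠ c) :
    topDiffColor a b ≠ topDiffColor b c := by
  intro h
  rcases hab.lt_or_gt with hab | hba <;> rcases hbc.lt_or_gt with hbc | hcb
  · have hp : (a ^^^ b).log2 = (b ^^^ c).log2 := by
      simp only [topDiffColor, if_pos hab, if_pos hbc] at h; omega
    have hb := (Nat.testBit_log2_xor_of_lt hab).2
    rw [hp, (Nat.testBit_log2_xor_of_lt hbc).1] at hb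
    exact Bool.false_ne_true hb
  · simp only [topDiffColor, if_pos hab, if_neg hcb.not_gt] at h; omega
  · simp only [topDiffColor, if_neg hba.not_gt, if_pos hbc] at h; omega
  · have hp : (a ^^^ b).log2 = (b ^^^ c).log2 := by
      simp only [topDiffColor, if_neg hba.not_gt, if_neg hcb.not_gt] at h; omega
    have hb := (Nat.testBit_log2_xor_of_lt hba).1
    rw [Nat.xor_comm b a, hp, Nat.xor_comm b c, (Nat.testBit_log2_xor_of_lt hcb).2] at hb
    exact Bool.false_ne_true hb.symm

lemma topDiffColor_le {a b n : ℕ} (ha : a < 2 ^ (n + 1)) (hb : b < 2 ^ (n + 1)) :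
    topDiffColor a b ≤ 2 * n + 1 := by
  have hlog : (a ^^^ b).log2 ≤ n := by
    rcases eq_or_ne (a ^^^ b) 0 with h | h
    · simp [h]
    · exact Nat.lt_succ_iff.1 ((Nat.log2_lt h).2 (Nat.xor_lt_two_pow ha hb))
  unfold topDiffColor
  split <;> omega

def towerColor : (k : ℕ) → (Fin (k + 1) → ℕ) → ℕ
  | 0, x => x 0
  | k + 1, x => topDiffColor (towerColor k (Fin.init x)) (towerColor k (Fin.tail x))

lemma towerColor_init_ne_tail (k : ℕ) (x : Fin (k + 2) → ℕ)
    (hx : ∀ j : Fin (k + 1), x j.castSucc ≠ x j.succ) :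
    towerColor k (Fin.init x) ≠ towerColor k (Fin.tail x) := by
  induction k with
  | zero => exact hx 0
  | succ k ih =>
    rw [towerColor, towerColor, Fin.tail_init_eq_init_tail]
    exact topDiffColor_ne (ih _ fun j => hx j.castSucc) (ih _ fun j => hx j.succ)

lemma tower_succ_eq_tower_two_pow (k M : ℕ) : tower (k + 1) M = tower k (2 ^ M) := by
  induction k with
  | zero => rfl
  | succ k ih => rw [tower, ih, tower]

lemma towerColor_le {M : ℕ} (hM : 1 ≤ M) (k : ℕ) (x : Fin (k + 1) → ℕ)
    (hx : ∀ j, x j ≤ tower k M) : towerColor k x ≤ 2 * M + 3 := by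
  induction k generalizing M with
  | zero => have := hx 0; simp only [tower] at this; simp only [towerColor]; omega
  | succ k ih =>
    have hsub : ∀ y : Fin (k + 1) → ℕ, (∀ j, y j ≤ tower k (2 ^ M)) →
        towerColor k y < 2 ^ (M + 1 + 1) := fun y hy => by
      have := ih (Nat.one_le_two_pow) y hy
      have : 2 ≤ 2 ^ M := Nat.le_self_pow (by omega) 2
      rw [pow_succ, pow_succ]; omega
    rw [tower_succ_eq_tower_two_pow] at hx
    exact topDiffColor_le (hsub _ fun j => hx _) (hsub _ fun j => hx _)

theorem AR_lower_colouring_neq_general (d c i : ℕ) (hd : 1 ≤ d) (hi : 2 ≤ i) :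
    ∃ C : (Fin (d+1) → ℕ) → (Fin (32*d + c) → ℕ),
      (∀ x : Fin (d+1) → ℕ, (∀ k, x k ≤ tower d (i^c)) → ∀ j, C x j ≤ i) ∧
      (∀ x : Fin (d+2) → ℕ, StrictMono x → x (Fin.last (d+1)) ≤ tower d (i^c) →
        C (fun k => x k.castSucc) ≠ C (fun k => x k.succ)) := by
  refine ⟨fun x j => towerColor d x / (i + 1) ^ (j : ℕ) % (i + 1),
    fun x _ j => Nat.lt_succ_iff.1 (Nat.mod_lt _ (by omega)), fun x hx hlast hC => ?_⟩
  have hM : 1 ≤ i ^ c := Nat.one_le_pow _ _ (by omega)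
  have hbig : 2 * i ^ c + 3 < (i + 1) ^ (32 * d + c) :=
    calc 2 * i ^ c + 3 < 2 ^ 32 * i ^ c := by omega
      _ ≤ (i + 1) ^ (32 * d) * (i + 1) ^ c := by gcongr <;> omega
      _ = (i + 1) ^ (32 * d + c) := (pow_add _ _ _).symm
  have hbound : ∀ y : Fin (d + 1) → ℕ, (∀ j, y j ≤ tower d (i ^ c)) →
      towerColor d y < (i + 1) ^ (32 * d + c) := fun y hy =>
    (towerColor_le hM d y hy).trans_lt hbig
  have hle : ∀ k, x k ≤ tower d (i ^ c) := fun k => (hx.monotone (Fin.le_last k)).trans hlast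
  refine towerColor_init_ne_tail d x (fun j => (hx Fin.castSucc_lt_succ).ne) ?_
  exact Nat.eq_of_div_pow_mod_eq (hbound _ fun _ => hle _) (hbound _ fun _ => hle _)
    fun j hj => congrFun hC ⟨j, hj⟩

/-- Lower bound colouring for adjacent Ramsey with constant parameter:
a colouring `C : {0,…,2_d(i^c)}^{d+1} → {0,…,i}^{32·d+c}` whose values on adjacent
increasing tuples are never equal. -/
theorem AR_lower_colouring_neq (d c i : ℕ) (hd : 1 ≤ d) (hc : 1 ≤ c) (hi : 2 ≤ i) :
    ∃ C : (Fin (d+1) → ℕ) → (Fin (32*d + c) → ℕ),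
      (∀ x : Fin (d+1) → ℕ, (∀ k, x k ≤ tower d (i^c)) → ∀ j, C x j ≤ i) ∧
      (∀ x : Fin (d+2) → ℕ, StrictMono x → x (Fin.last (d+1)) ≤ tower d (i^c) →
        C (fun k => x k.castSucc) ≠ C (fun k => x k.succ)) :=
  AR_lower_colouring_neq_general d c i hd hi
end

section
/- For every d ≥ 1, every c ≥ 1 and every i ≥ 2 there exists a colouring C : {0,...,2_d(i^c)}^{d+1} → {0,...,i}^{64·d+2·c} such that C(x_1,...,x_{d+1}) ≰ C(x_2,...,x_{d+2}) for all x_1 < x_2 < ... < x_{d+2} ≤ 2_d(i^c), where ≤ on tuples is the coordinatewise order. -/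
/-!
Colour a pair `(x, y)` by the position of the highest bit in which `x` and `y` differ, together
with whether `x < y`. For `x < y < z` the middle entry `y` has bit `1` at the first position and
bit `0` at the second, so the colours of `(x, y)` and `(y, z)` differ; and numbers below `2 ^ t`
get colours below `2 * t`. Applying it `d` times to adjacent entries turns a
`(d+1)`-tuple below `2_d(i^c)` into a single number below `2 * (i^c + 1 + 2 * d)`, and the two
shifts of an increasing `(d+2)`-tuple get different numbers. Writing that number in base `i + 1`
followed by the complemented digits turns "different" into "coordinatewise incomparable".
-/

namespace AdjacentRamsey

/-- Junk value `0` when `x = y`. -/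
def msbDiff (x y : ℕ) : ℕ := (x ^^^ y).log2

lemma msbDiff_comm (x y : ℕ) : msbDiff x y = msbDiff y x := by
  rw [msbDiff, Nat.xor_comm, msbDiff]

lemma testBit_msbDiff_ne {x y : ℕ} (h : x ≠ y) :
    x.testBit (msbDiff x y) ≠ y.testBit (msbDiff x y) := by
  have hbit := Nat.testBit_log2 (Nat.xor_ne_zero_iff.mpr h)
  rw [Nat.testBit_xor] at hbit
  exact Bool.xor_iff_ne.mp hbit

lemma testBit_eq_of_msbDiff_lt {x y k : ℕ} (hk : msbDiff x y < k) :
    x.testBit k = y.testBit k := by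
  have hxor : (x ^^^ y).testBit k = false := by
    by_cases h0 : x ^^^ y = 0
    · rw [h0, Nat.zero_testBit]
    · exact Nat.testBit_lt_two_pow ((Nat.log2_lt h0).mp hk)
  simpa [Nat.testBit_xor] using hxor

lemma testBit_msbDiff_of_lt {x y : ℕ} (h : x < y) :
    x.testBit (msbDiff x y) = false ∧ y.testBit (msbDiff x y) = true := by
  have hne := testBit_msbDiff_ne h.ne
  cases hx : x.testBit (msbDiff x y) <;> cases hy : y.testBit (msbDiff x y)
  · simp [hx, hy] at hne
  · exact ⟨rfl, rfl⟩
  · have hyx : y < x := Nat.lt_of_testBit _ hy hx fun k hk ↦ (testBit_eq_of_msbDiff_lt hk).symm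
    exact absurd h hyx.not_gt
  · simp [hx, hy] at hne

lemma msbDiff_ne_of_lt_of_lt {x y z : ℕ} (hxy : x < y) (hyz : y < z) :
    msbDiff x y ≠ msbDiff y z := by
  intro heq
  have h1 := (testBit_msbDiff_of_lt hxy).2
  have h2 := (testBit_msbDiff_of_lt hyz).1
  rw [heq, h2] at h1
  exact Bool.false_ne_true h1

lemma msbDiff_lt {x y t : ℕ} (hx : x < 2 ^ t) (hy : y < 2 ^ t) (ht : t ≠ 0) :
    msbDiff x y < t := by
  by_cases h0 : x ^^^ y = 0
  · simp [msbDiff, h0, Nat.pos_of_ne_zero ht]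
  · exact (Nat.log2_lt h0).mpr (Nat.xor_lt_two_pow hx hy)

def pairColour (x y : ℕ) : ℕ := 2 * msbDiff x y + if x < y then 1 else 0

lemma pairColour_ne {x y z : ℕ} (hxy : x ≠ y) (hyz : y ≠ z) :
    pairColour x y ≠ pairColour y z := by
  intro h
  unfold pairColour at h
  split_ifs at h with h1 h2 h2
  · exact msbDiff_ne_of_lt_of_lt h1 h2 (by omega)
  · omega
  · omega
  · have hzy : z < y := by omega
    have hyx : y < x := by omega
    rw [msbDiff_comm x y, msbDiff_comm y z] at h
    exact msbDiff_ne_of_lt_of_lt hzy hyx (by omega)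

lemma pairColour_lt {x y t : ℕ} (hx : x < 2 ^ t) (hy : y < 2 ^ t) (ht : t ≠ 0) :
    pairColour x y < 2 * t := by
  have := msbDiff_lt hx hy ht
  unfold pairColour
  split <;> omega

def colourStep {k : ℕ} (x : Fin (k+2) → ℕ) : Fin (k+1) → ℕ :=
  fun j ↦ pairColour (x j.castSucc) (x j.succ)

def iterColour : (k : ℕ) → (Fin (k+1) → ℕ) → ℕ
  | 0, x => x 0
  | k+1, x => iterColour k (colourStep x)

def AdjDistinct {n : ℕ} (x : Fin (n+1) → ℕ) : Prop :=
  ∀ j : Fin n, x j.castSucc ≠ x j.succ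

lemma AdjDistinct.colourStep {k : ℕ} {x : Fin (k+2) → ℕ} (h : AdjDistinct x) :
    AdjDistinct (colourStep x) := by
  intro j
  simp only [AdjacentRamsey.colourStep, Fin.succ_castSucc]
  exact pairColour_ne (h j.castSucc) (h j.succ)

lemma colourStep_init {k : ℕ} (x : Fin (k+3) → ℕ) :
    colourStep (Fin.init x) = Fin.init (colourStep x) := by
  funext j
  simp only [colourStep, Fin.init, Fin.succ_castSucc]

lemma colourStep_tail {k : ℕ} (x : Fin (k+3) → ℕ) :
    colourStep (Fin.tail x) = Fin.tail (colourStep x) := by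
  funext j
  simp only [colourStep, Fin.tail, Fin.succ_castSucc]

lemma iterColour_init_ne_tail {k : ℕ} {x : Fin (k+2) → ℕ} (hx : AdjDistinct x) :
    iterColour k (Fin.init x) ≠ iterColour k (Fin.tail x) := by
  induction k with
  | zero => exact hx 0
  | succ k ih =>
    simp only [iterColour, colourStep_init, colourStep_tail]
    exact ih hx.colourStep

lemma two_mul_two_pow_add_le (n e : ℕ) : 2 * (2 ^ n + e) ≤ 2 ^ (n + e + 2) := by
  have he : e < 2 ^ e := Nat.lt_two_pow_self
  have hn : 1 ≤ 2 ^ n := Nat.one_le_two_pow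
  rw [pow_add, pow_add]
  nlinarith

/-- The extra `e` absorbs the additive slack that each step of the recursion adds. -/
lemma iterColour_lt (a : ℕ) :
    ∀ (k e : ℕ) (x : Fin (k+1) → ℕ), (∀ j, x j < 2 * (tower k a + e)) →
      iterColour k x < 2 * (a + e + 2 * k)
  | 0, e, x, hx => by simpa [iterColour, tower] using hx 0
  | k+1, e, x, hx => by
    have hpow : ∀ j, x j < 2 ^ (tower k a + e + 2) := fun j ↦
      (hx j).trans_le (two_mul_two_pow_add_le (tower k a) e)
    have hstep : ∀ j, colourStep x j < 2 * (tower k a + (e + 2)) := fun j ↦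
      pairColour_lt (hpow j.castSucc) (hpow j.succ) (by omega)
    have := iterColour_lt a k (e + 2) (colourStep x) hstep
    rw [iterColour]
    omega

lemma iterColour_lt_of_le_tower {k a : ℕ} {x : Fin (k+1) → ℕ} (hx : ∀ j, x j ≤ tower k a) :
    iterColour k x < 2 * (a + 1 + 2 * k) :=
  iterColour_lt a k 1 x fun j ↦ by have := hx j; omega

def digitCode (b L n j : ℕ) : ℕ :=
  if j < L then n / b ^ j % b else b - 1 - n / b ^ (j - L) % b

lemma digitCode_le {b : ℕ} (hb : 0 < b) (L n j : ℕ) : digitCode b L n j ≤ b - 1 := by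
  have := Nat.mod_lt (n / b ^ j) hb
  unfold digitCode
  split <;> omega

lemma mod_pow_eq_of_digits_eq {b m n : ℕ} :
    ∀ L, (∀ t < L, m / b ^ t % b = n / b ^ t % b) → m % b ^ L = n % b ^ L
  | 0, _ => by simp [Nat.mod_one]
  | L+1, h => by
    rw [Nat.mod_pow_succ, Nat.mod_pow_succ, h L (by omega),
      mod_pow_eq_of_digits_eq L fun t ht ↦ h t (by omega)]

lemma eq_of_digitCode_le {b L m n : ℕ} (hb : 0 < b) (hm : m < b ^ L) (hn : n < b ^ L)
    (h : ∀ j < 2 * L, digitCode b L m j ≤ digitCode b L n j) : m = n := by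
  rw [← Nat.mod_eq_of_lt hm, ← Nat.mod_eq_of_lt hn]
  refine mod_pow_eq_of_digits_eq L fun t ht ↦ ?_
  have hlow := h t (by omega)
  have hhigh := h (t + L) (by omega)
  have := Nat.mod_lt (m / b ^ t) hb
  have := Nat.mod_lt (n / b ^ t) hb
  simp only [digitCode, ht, if_true, Nat.add_sub_cancel, show ¬ t + L < L by omega,
    if_false] at hlow hhigh
  omega

lemma two_mul_pow_add_le_pow {d c i : ℕ} (hd : 1 ≤ d) (hi : 1 ≤ i) :
    2 * (i ^ c + 1 + 2 * d) ≤ (i + 1) ^ (32 * d + c) := by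
  have hic : 1 ≤ i ^ c := Nat.one_le_pow _ _ hi
  have hd2 : 4 * d + 4 ≤ 2 ^ (32 * d) := by
    have : d + 1 ≤ 2 ^ d := Nat.lt_two_pow_self
    calc 4 * d + 4 ≤ 2 ^ 2 * 2 ^ d := by omega
      _ = 2 ^ (d + 2) := by rw [pow_add, mul_comm]
      _ ≤ 2 ^ (32 * d) := Nat.pow_le_pow_right (by norm_num) (by omega)
  calc 2 * (i ^ c + 1 + 2 * d) ≤ i ^ c * (4 * d + 4) := by nlinarith
    _ ≤ (i + 1) ^ c * (i + 1) ^ (32 * d) :=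
      Nat.mul_le_mul (Nat.pow_le_pow_left (by omega) _)
        (hd2.trans (Nat.pow_le_pow_left (by omega) _))
    _ = (i + 1) ^ (32 * d + c) := by rw [← pow_add, Nat.add_comm c]

end AdjacentRamsey

open AdjacentRamsey in
theorem AR_lower_colouring_not_le_general (d c i : ℕ) (hd : 1 ≤ d) (hi : 2 ≤ i) :
    ∃ C : (Fin (d+1) → ℕ) → (Fin (64*d + 2*c) → ℕ),
      (∀ x : Fin (d+1) → ℕ, (∀ k, x k ≤ tower d (i^c)) → ∀ j, C x j ≤ i) ∧
      (∀ x : Fin (d+2) → ℕ, StrictMono x → x (Fin.last (d+1)) ≤ tower d (i^c) →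
        ¬ ∀ j, C (fun k => x k.castSucc) j ≤ C (fun k => x k.succ) j) := by
  refine ⟨fun x j ↦ digitCode (i + 1) (32 * d + c) (iterColour d x) j,
    fun x _ j ↦ digitCode_le (Nat.succ_pos i) _ _ _, ?_⟩
  intro x hx hlast hle
  have hcode_lt : ∀ y : Fin (d+1) → ℕ, (∀ k, y k ≤ tower d (i^c)) →
      iterColour d y < (i + 1) ^ (32 * d + c) := fun y hy ↦
    (iterColour_lt_of_le_tower hy).trans_le (two_mul_pow_add_le_pow hd (by omega))
  have hbounded : ∀ k, x k ≤ tower d (i^c) := fun k ↦ (hx.monotone (Fin.le_last k)).trans hlast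
  have hadj : AdjDistinct x := fun j ↦ (hx Fin.castSucc_lt_succ).ne
  exact iterColour_init_ne_tail hadj <|
    eq_of_digitCode_le (Nat.succ_pos i) (hcode_lt _ fun k ↦ hbounded k.castSucc)
      (hcode_lt _ fun k ↦ hbounded k.succ) fun j hj ↦ hle ⟨j, by omega⟩

/-- Lower bound colouring for adjacent Ramsey with constant parameter:
a colouring `C : {0,…,2_d(i^c)}^{d+1} → {0,…,i}^{64·d+2·c}` whose values on adjacent
increasing tuples are never coordinatewise `≤`. -/
theorem AR_lower_colouring_not_le (d c i : ℕ) (hd : 1 ≤ d) (hc : 1 ≤ c) (hi : 2 ≤ i) :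
    ∃ C : (Fin (d+1) → ℕ) → (Fin (64*d + 2*c) → ℕ),
      (∀ x : Fin (d+1) → ℕ, (∀ k, x k ≤ tower d (i^c)) → ∀ j, C x j ≤ i) ∧
      (∀ x : Fin (d+2) → ℕ, StrictMono x → x (Fin.last (d+1)) ≤ tower d (i^c) →
        ¬ ∀ j, C (fun k => x k.castSucc) j ≤ C (fun k => x k.succ) j) :=
  AR_lower_colouring_not_le_general d c i hd hi
end

section
/- Let M assign to every function f : ℕ → ℕ a function M_f : ℕ×ℕ×ℕ → ℕ such that whenever f(i) ≤ g(i) for all i ≤ M_g(n,c,x), then M_f(n,c,x) ≤ M_g(n,c,x). Let l : ℕ×ℕ → ℕ, written (c,i) ↦ l_c(i), be nondecreasing in c and strictly increasing and unbounded in i. Let (H_n)_{n∈ℕ} be a family of functions ℕ → ℕ, set H(i) = H_i(i), and assume H is strictly increasing. If M_{l_c^{-1}}(n,c,i) ≥ H_n(i) for all n, c, i, then M_h(x,x,x) ≥ H(x) for all x, where h(i) = l_{H^{-1}(i)}^{-1}(i). -/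
/-- The inverse of a nondecreasing unbounded `ℓ : ℕ → ℕ` :
`ℓ⁻¹(i) = max {j : ℓ j ≤ i}`, and `0` if no such `j` exists. -/
noncomputable def finv (ℓ : ℕ → ℕ) (i : ℕ) : ℕ := sSup {j | ℓ j ≤ i}

lemma sSup_le_of_forall_le {S : Set ℕ} {x : ℕ} (h : ∀ j ∈ S, j ≤ x) : sSup S ≤ x := by
  rcases S.eq_empty_or_nonempty with rfl | hne
  · simp [csSup_empty]
  · exact csSup_le hne h

/-- Quantitative core of the proof-theoretic lower bounds sharpening lemma. -/
theorem proof_theoretic_lower_bounds_sharpening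
    (M : (ℕ → ℕ) → ℕ → ℕ → ℕ → ℕ)
    (hM : ∀ f g : ℕ → ℕ, ∀ n c x, (∀ i ≤ M g n c x, f i ≤ g i) → M f n c x ≤ M g n c x)
    (l : ℕ → ℕ → ℕ)
    (hlc : ∀ i, Monotone (fun c => l c i))
    (hli : ∀ c, StrictMono (l c))
    (hlu : ∀ c b, ∃ i, b < l c i)
    (H : ℕ → ℕ → ℕ)
    (hH : StrictMono (fun i => H i i))
    (hbound : ∀ n c i, H n i ≤ M (finv (l c)) n c i) :
    ∀ x, H x x ≤ M (fun i => finv (l (finv (fun j => H j j) i)) i) x x x := by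
  intro x
  set h : ℕ → ℕ := fun i => finv (l (finv (fun j => H j j) i)) i with hh
  by_contra hcon
  push_neg at hcon
  have key : M (finv (l x)) x x x ≤ M h x x x := by
    apply hM
    intro i hi
    have hix : i < H x x := lt_of_le_of_lt hi hcon
    -- finv (fun j => H j j) i ≤ x
    have hc : finv (fun j => H j j) i ≤ x := by
      apply sSup_le_of_forall_le
      intro j hj
      simp only [Set.mem_setOf_eq] at hj
      by_contra hjx
      push_neg at hjx
      have h2 : H x x < H j j := hH hjx
      omega
    -- hence l (finv ...) ≤ l x pointwise, so finv (l x) i ≤ h i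
    have hsub : {j | l x j ≤ i} ⊆ {j | l (finv (fun j => H j j) i) j ≤ i} := by
      intro j hj
      simp only [Set.mem_setOf_eq] at *
      exact le_trans (hlc j hc) hj
    rcases ({j | l x j ≤ i} : Set ℕ).eq_empty_or_nonempty with he | hne
    · simp [finv, he, csSup_empty]
    · have hbdd : BddAbove {j | l (finv (fun j => H j j) i) j ≤ i} := by
        obtain ⟨k, hk⟩ := hlu (finv (fun j => H j j) i) i
        refine ⟨k, fun j hj => ?_⟩
        simp only [Set.mem_setOf_eq] at hj
        by_contra hjk
        push_neg at hjk
        have h3 := hli (finv (fun j => H j j) i) hjk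
        omega
      exact csSup_le_csSup hbdd hne hsub
  have := hbound x x x
  omega
end

section
/- Let M assign to every function f : ℕ → ℕ a function M_f : ℕ×ℕ → ℕ such that whenever f(i) ≤ g(i) for all i ≤ M_g(d,x), then M_f(d,x) ≤ M_g(d,x); for a number k, M_k denotes M applied to the constant function with value k. Let l : ℕ×ℕ → ℕ, written (c,i) ↦ l_c(i), be nondecreasing in c, strictly increasing and unbounded in i, and satisfy l_c(j) ≥ j for all c, j. Let B : ℕ → ℕ be strictly increasing and unbounded, and let g_1 : ℕ → ℕ and g_2 : ℕ×ℕ → ℕ satisfy g_1(d) ≤ g_2(d,x) for all d, x and M_k(d,x) ≤ l_{g_1(d)}(k) whenever k ≥ g_2(d,x). Then M_f(d,x) ≤ l_{g_1(d)}(B(g_2(d,x))) for all d, x, where f(i) = l_{B^{-1}(i)}^{-1}(i). -/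
lemma finv_le {ℓ : ℕ → ℕ} (hs : StrictMono ℓ) {i K : ℕ} (h : i < ℓ (K + 1)) :
    finv ℓ i ≤ K := by
  apply csSup_le'
  intro j hj
  have : ℓ j < ℓ (K + 1) := lt_of_le_of_lt hj h
  exact Nat.lt_succ_iff.mp (hs.lt_iff_lt.mp this)

lemma le_finv {ℓ : ℕ → ℕ} (hs : StrictMono ℓ) (hu : ∀ b, ∃ i, b < ℓ i)
    {i j : ℕ} (h : ℓ j ≤ i) : j ≤ finv ℓ i := by
  obtain ⟨m, hm⟩ := hu i
  refine le_csSup ⟨m, ?_⟩ h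
  intro j' hj'
  exact le_of_lt (hs.lt_iff_lt.mp (lt_of_le_of_lt hj' hm))

/-- Quantitative core of the upper bounds sharpening lemma. -/
theorem upper_bounds_sharpening_lemma
    (M : (ℕ → ℕ) → ℕ → ℕ → ℕ)
    (hM : ∀ f g : ℕ → ℕ, ∀ d x, (∀ i ≤ M g d x, f i ≤ g i) → M f d x ≤ M g d x)
    (l : ℕ → ℕ → ℕ)
    (hlc : ∀ i, Monotone (fun c => l c i))
    (hli : ∀ c, StrictMono (l c))
    (hlu : ∀ c b, ∃ i, b < l c i)
    (hlge : ∀ c j, j ≤ l c j)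
    (B : ℕ → ℕ) (hB : StrictMono B) (hBu : ∀ b, ∃ i, b < B i)
    (g₁ : ℕ → ℕ) (g₂ : ℕ → ℕ → ℕ)
    (hg : ∀ d x, g₁ d ≤ g₂ d x)
    (hMk : ∀ d x k, g₂ d x ≤ k → M (fun _ => k) d x ≤ l (g₁ d) k) :
    ∀ d x, M (fun i => finv (l (finv B i)) i) d x ≤ l (g₁ d) (B (g₂ d x)) := by
  intro d x
  set K := B (g₂ d x) with hK
  have hkey : M (fun _ => K) d x ≤ l (g₁ d) K := hMk d x K (hB.le_apply)
  have hmain : M (fun i => finv (l (finv B i)) i) d x ≤ M (fun _ => K) d x := by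
    apply hM
    intro i hi
    have hiK : i ≤ l (g₁ d) K := le_trans hi hkey
    -- show finv (l (finv B i)) i ≤ K
    apply finv_le (hli _)
    rcases le_or_gt i K with h | h
    · exact lt_of_le_of_lt h (lt_of_lt_of_le (Nat.lt_succ_self K) (hlge _ _))
    · -- K < i, so B (g₁ d) ≤ K < i, hence g₁ d ≤ finv B i
      have hBg : B (g₁ d) ≤ i := le_of_lt (lt_of_le_of_lt (hB.monotone (hg d x)) h)
      have hc : g₁ d ≤ finv B i := le_finv hB hBu hBg
      calc i ≤ l (g₁ d) K := hiK
        _ < l (g₁ d) (K + 1) := (hli _) (Nat.lt_succ_self K)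
        _ ≤ l (finv B i) (K + 1) := hlc _ hc
  exact le_trans hmain hkey
end

section
/- For all d ≥ 1 and r ≥ 1 there exists K such that for all k ≥ K: AR_k^{d+1}(r) ≤ 2_d(k^{r+1}). -/
/-!
Cut every colour at `k + 1`, so that on `{0, …, R}` the colouring takes at most `c = (k+2)^r`
values. The Erdős–Rado argument then finds `c + 1 + d` points on which the colour of an
increasing `(d+1)`-tuple depends only on its minimum: a greedy pigeonhole argument gives a large
end-homogeneous set (the colour of `(x, t)` does not depend on `t > max x`), and fixing its largest
point as the last coordinate lowers the dimension by one. Two of the first `c + 1` points, `a < b`,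
then give the same colour when followed by the last `d` points `y`, so `x = (a, b, y)` satisfies
`C(a, b, y₁, …) = C(a, y) = C(b, y)`. The `d` dimension reductions cost a tower of height `d`
over `O(c log k)`, and `c log k = o(k^(r+1))`.
-/

open Finset

section Homogeneous

variable {α : Type*} {n : ℕ}

def EndHomogeneousOn (C : (Fin (n + 2) → ℕ) → α) (P A : Finset ℕ) : Prop :=
  ∀ x : Fin (n + 1) → ℕ, StrictMono x → (∀ i, x i ∈ P) →
    ∀ u ∈ A, ∀ v ∈ A, x (Fin.last n) < u → x (Fin.last n) < v →
      C (Fin.snoc x u) = C (Fin.snoc x v)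

def MinHomogeneousOn (C : (Fin (n + 1) → ℕ) → α) (S : Finset ℕ) : Prop :=
  ∀ x y : Fin (n + 1) → ℕ, StrictMono x → StrictMono y → (∀ i, x i ∈ S) → (∀ i, y i ∈ S) →
    x 0 = y 0 → C x = C y

theorem EndHomogeneousOn.mono {C : (Fin (n + 2) → ℕ) → α} {P A B : Finset ℕ}
    (h : EndHomogeneousOn C P A) (hBA : B ⊆ A) : EndHomogeneousOn C P B :=
  fun x hx hxP u hu v hv => h x hx hxP u (hBA hu) v (hBA hv)

/-- The new prefix point is `b = min L`; the reservoir shrinks to the pigeonhole class of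
`t ↦ (y ↦ C (y, b, t))`, with `y` ranging over `n`-tuples from `P`. -/
theorem EndHomogeneousOn.exists_insert_min [Fintype α] {C : (Fin (n + 2) → ℕ) → α}
    {P L : Finset ℕ} (h : EndHomogeneousOn C P (P ∪ L)) (hL : L.Nonempty)
    (hPL : ∀ p ∈ P, ∀ l ∈ L, p < l) {q : ℕ} (hq : Fintype.card α ^ (#P ^ n) * q ≤ #L - 1) :
    ∃ L' ⊆ L.erase (L.min' hL), q ≤ #L' ∧
      EndHomogeneousOn C (insert (L.min' hL) P) (insert (L.min' hL) P ∪ L') := by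
  classical
  have : Nonempty α := ⟨C 0⟩
  set b := L.min' hL
  let F : ℕ → (Fin n → P) → α := fun t y => C (Fin.snoc (Fin.snoc (fun i => (y i : ℕ)) b) t)
  obtain ⟨φ, -, hφ⟩ := exists_le_card_fiber_of_mul_le_card_of_maps_to
    (s := L.erase b) (f := F) (n := q) (fun _ _ => mem_univ _) univ_nonempty
    (by rw [card_erase_of_mem (min'_mem L hL)]; simpa using hq)
  refine ⟨{t ∈ L.erase b | F t = φ}, filter_subset _ _, hφ, ?_⟩
  intro x hx hxP u hu v hv hxu hxv
  have hPb : ∀ p ∈ P, p < b := fun p hp => hPL p hp b (min'_mem L hL)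
  rcases mem_insert.1 (hxP (Fin.last n)) with hlast | hlast
  · have hfib : ∀ w ∈ insert b P ∪ {t ∈ L.erase b | F t = φ}, x (Fin.last n) < w → F w = φ := by
      intro w hw hxw
      rcases mem_union.1 hw with hw | hw
      · rcases mem_insert.1 hw with hw | hw
        · omega
        · have := hPb w hw; omega
      · exact (mem_filter.1 hw).2
    have hinit : ∀ i, Fin.init x i ∈ P := fun i =>
      (mem_insert.1 (hxP _)).resolve_left (hlast ▸ hx (Fin.castSucc_lt_last i)).ne
    have hx_eq : x = Fin.snoc (fun i => ((⟨Fin.init x i, hinit i⟩ : P) : ℕ)) b := by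
      rw [← hlast]; exact (Fin.snoc_init_self x).symm
    rw [hx_eq]
    exact congrFun ((hfib u hu hxu).trans (hfib v hv hxv).symm) _
  · have hxP' : ∀ i, x i ∈ P := fun i =>
      (mem_insert.1 (hxP i)).resolve_left
        ((hx.monotone (Fin.le_last i)).trans_lt (hPb _ hlast)).ne
    have hsub : insert b P ∪ {t ∈ L.erase b | F t = φ} ⊆ P ∪ L := by
      intro w hw
      simp only [mem_union, mem_insert, mem_filter, mem_erase] at hw ⊢
      rcases hw with (rfl | hw) | hw
      · exact Or.inr (min'_mem L hL)
      · exact Or.inl hw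
      · exact Or.inr hw.1.2
    exact h x hx hxP' u (hsub hu) v (hsub hv) hxu hxv

theorem EndHomogeneousOn.exists_superset [Fintype α] {C : (Fin (n + 2) → ℕ) → α} {N : ℕ}
    (j : ℕ) {P L : Finset ℕ} (h : EndHomogeneousOn C P (P ∪ L))
    (hPL : ∀ p ∈ P, ∀ l ∈ L, p < l) (hPN : #P + j ≤ N)
    (hL : (2 * Fintype.card α ^ N ^ n) ^ j ≤ #L) :
    ∃ E, P ⊆ E ∧ E ⊆ P ∪ L ∧ #E = #P + j ∧ EndHomogeneousOn C E E := by
  induction j generalizing P L with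
  | zero => exact ⟨P, subset_rfl, subset_union_left, rfl, h.mono subset_union_left⟩
  | succ j ih =>
    set Q := Fintype.card α ^ N ^ n
    have hα : 0 < Fintype.card α := Fintype.card_pos_iff.2 ⟨C 0⟩
    have hQP : Fintype.card α ^ (#P ^ n) ≤ Q :=
      Nat.pow_le_pow_right hα (Nat.pow_le_pow_left (by omega) n)
    have hQj : 1 ≤ Q * (2 * Q) ^ j := Nat.one_le_iff_ne_zero.2 (by positivity)
    have hLQ : (2 * Q) ^ (j + 1) = Q * (2 * Q) ^ j + Q * (2 * Q) ^ j := by ring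
    have hLne : L.Nonempty := card_pos.1 (by omega)
    obtain ⟨L', hL'L, hL', h'⟩ := h.exists_insert_min hLne hPL (q := (2 * Q) ^ j)
      (by have := Nat.mul_le_mul_right ((2 * Q) ^ j) hQP; omega)
    set b := L.min' hLne
    have hbP : b ∉ P := fun hb => lt_irrefl b (hPL b hb b (min'_mem L hLne))
    have hbL' : ∀ l ∈ L', b < l := fun l hl =>
      have hl := mem_erase.1 (hL'L hl)
      lt_of_le_of_ne (min'_le L l hl.2) hl.1.symm
    have hPL' : ∀ p ∈ insert b P, ∀ l ∈ L', p < l := by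
      intro p hp l hl
      rcases mem_insert.1 hp with rfl | hp
      · exact hbL' l hl
      · exact hPL p hp l (erase_subset _ _ (hL'L hl))
    obtain ⟨E, hPE, hEL, hE, hEC⟩ :=
      ih h' hPL' (by rw [card_insert_of_notMem hbP]; omega) hL'
    refine ⟨E, (subset_insert b P).trans hPE, hEL.trans ?_, by
      rw [hE, card_insert_of_notMem hbP]; ring, hEC⟩
    exact union_subset (insert_subset (mem_union_right _ (min'_mem L hLne)) subset_union_left)
      ((hL'L.trans (erase_subset _ _)).trans subset_union_right)

theorem exists_endHomogeneousOn [Fintype α] (C : (Fin (n + 2) → ℕ) → α) {N : ℕ}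
    {L : Finset ℕ} (hL : (2 * Fintype.card α ^ N ^ n) ^ N ≤ #L) :
    ∃ E ⊆ L, #E = N ∧ EndHomogeneousOn C E E := by
  obtain ⟨E, -, hEL, hE, hEC⟩ := EndHomogeneousOn.exists_superset (P := ∅) N
    (fun x _ hx => absurd (hx 0) (notMem_empty _)) (by simp) (by simp) hL
  exact ⟨E, by simpa using hEL, by simpa using hE, hEC⟩

theorem MinHomogeneousOn.of_snoc {C : (Fin (n + 2) → ℕ) → α} {E S : Finset ℕ} {M : ℕ}
    (hE : EndHomogeneousOn C E E) (hM : M ∈ E) (hSE : S ⊆ E) (hSM : ∀ s ∈ S, s < M)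
    (hS : MinHomogeneousOn (fun x => C (Fin.snoc x M)) S) : MinHomogeneousOn C S := by
  have hlast : ∀ x, StrictMono x → (∀ i, x i ∈ S) → C x = C (Fin.snoc (Fin.init x) M) := by
    intro x hx hxS
    conv_lhs => rw [← Fin.snoc_init_self x]
    exact hE _ (hx.comp Fin.strictMono_castSucc) (fun i => hSE (hxS _)) _ (hSE (hxS _)) M hM
      (hx (Fin.castSucc_lt_last _)) (hSM _ (hxS _))
  intro x y hx hy hxS hyS h0
  rw [hlast x hx hxS, hlast y hy hyS]
  exact hS _ _ (hx.comp Fin.strictMono_castSucc) (hy.comp Fin.strictMono_castSucc)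
    (fun i => hxS _) (fun i => hyS _) h0

/-- Number of points that guarantees `m` points on which a colouring of increasing
`(n+1)`-tuples with `c` colours depends only on the minimum. -/
def minHomogeneousBound (c : ℕ) : ℕ → ℕ → ℕ
  | 0, m => m
  | n + 1, m => (2 * c ^ ((minHomogeneousBound c n m + 1) ^ n)) ^ (minHomogeneousBound c n m + 1)

theorem exists_minHomogeneousOn [Fintype α] :
    ∀ {n : ℕ} (C : (Fin (n + 1) → ℕ) → α) (m : ℕ) {L : Finset ℕ},
      minHomogeneousBound (Fintype.card α) n m ≤ #L → ∃ S ⊆ L, m ≤ #S ∧ MinHomogeneousOn C S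
  | 0, C, m, L, hL =>
    ⟨L, subset_rfl, hL, fun x y _ _ _ _ h0 =>
      congrArg C (funext fun i => by rwa [Fin.fin_one_eq_zero i])⟩
  | n + 1, C, m, L, hL => by
    obtain ⟨E, hEL, hE, hEC⟩ := exists_endHomogeneousOn C hL
    have hEne : E.Nonempty := card_pos.1 (by omega)
    set M := E.max' hEne
    obtain ⟨S, hS, hSm, hSC⟩ := exists_minHomogeneousOn (fun x => C (Fin.snoc x M)) m
      (L := E.erase M) (by rw [card_erase_of_mem (max'_mem E hEne)]; omega)
    have hSE : S ⊆ E := hS.trans (erase_subset _ _)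
    refine ⟨S, hSE.trans hEL, hSm, hSC.of_snoc hEC (max'_mem E hEne) hSE fun s hs => ?_⟩
    have hs := mem_erase.1 (hS hs)
    exact lt_of_le_of_ne (le_max' E s hs.2) hs.1

theorem MinHomogeneousOn.exists_init_eq_tail [Fintype α] {d : ℕ}
    {C : (Fin (d + 1) → ℕ) → α} {S : Finset ℕ} (hS : MinHomogeneousOn C S)
    (hcard : Fintype.card α + 1 + d ≤ #S) :
    ∃ x : Fin (d + 2) → ℕ, StrictMono x ∧ (∀ i, x i ∈ S) ∧ C (Fin.init x) = C (Fin.tail x) := by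
  obtain ⟨T, hTS, hT⟩ := exists_subset_card_eq hcard
  set f := T.orderEmbOfFin hT
  have hfS : ∀ i, f i ∈ S := fun i => hTS (T.orderEmbOfFin_mem hT i)
  set y : Fin d → ℕ := fun i => f (Fin.natAdd _ i)
  set a : Fin (Fintype.card α + 1) → ℕ := fun t => f (Fin.castAdd d t)
  have hcons : ∀ t, StrictMono (Fin.cons (a t) y : Fin (d + 1) → ℕ) := fun t =>
    Fin.strictMono_cons.2
      ⟨fun j => f.strictMono (by simp only [Fin.lt_def, Fin.val_castAdd, Fin.val_natAdd]; omega),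
      f.strictMono.comp (Fin.strictMono_natAdd _)⟩
  have hconsS : ∀ t i, (Fin.cons (a t) y : Fin (d + 1) → ℕ) i ∈ S := by
    intro t i
    refine Fin.cases ?_ (fun j => ?_) i
    exacts [hfS _, hfS _]
  obtain ⟨t₁, t₂, hne, heq⟩ :=
    Fintype.exists_ne_map_eq_of_card_lt (fun t => C (Fin.cons (a t) y)) (by simp)
  wlog hlt : t₁ < t₂ generalizing t₁ t₂
  · exact this t₂ t₁ hne.symm heq.symm (lt_of_le_of_ne (not_lt.1 hlt) hne.symm)
  set x : Fin (d + 2) → ℕ := Fin.cons (a t₁) (Fin.cons (a t₂) y)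
  have hx : StrictMono x := Fin.strictMono_cons.2
    ⟨fun j => (f.strictMono (Fin.strictMono_castAdd d hlt)).trans_le
      ((hcons t₂).monotone (Fin.zero_le j)), hcons t₂⟩
  have hxS : ∀ i, x i ∈ S := by
    intro i
    refine Fin.cases ?_ (fun j => ?_) i
    exacts [hfS _, hconsS t₂ j]
  refine ⟨x, hx, hxS, ?_⟩
  calc C (Fin.init x) = C (Fin.cons (a t₁) y) :=
        hS _ _ (hx.comp Fin.strictMono_castSucc) (hcons t₁) (fun i => hxS _) (hconsS t₁) rfl
    _ = C (Fin.tail x) := heq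

end Homogeneous

theorem le_minHomogeneousBound {c : ℕ} (hc : 1 ≤ c) (n m : ℕ) :
    m ≤ minHomogeneousBound c n m := by
  induction n with
  | zero => rfl
  | succ n ih =>
    set T := minHomogeneousBound c n m + 1
    have h2 : 2 ≤ 2 * c ^ (T ^ n) := by have := Nat.one_le_pow (T ^ n) c hc; omega
    have : T < 2 ^ T := Nat.lt_two_pow_self
    have : 2 ^ T ≤ (2 * c ^ (T ^ n)) ^ T := Nat.pow_le_pow_left h2 T
    show m ≤ (2 * c ^ (T ^ n)) ^ T
    omega

theorem minHomogeneousBound_succ_add_one_le {c l : ℕ} (hc : c ≤ 2 ^ l) (n m : ℕ) :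
    minHomogeneousBound c (n + 1) m + 1 ≤
      2 ^ ((l + 2) * (minHomogeneousBound c n m + 1) ^ (n + 1)) := by
  set T := minHomogeneousBound c n m + 1
  have hT : 1 ≤ T ^ (n + 1) := Nat.one_le_pow _ _ (by omega)
  have hbound : minHomogeneousBound c (n + 1) m ≤ 2 ^ ((l + 1) * T ^ (n + 1)) :=
    calc (2 * c ^ (T ^ n)) ^ T ≤ (2 * (2 ^ l) ^ (T ^ n)) ^ T := by gcongr
      _ = 2 ^ ((1 + l * T ^ n) * T) := by rw [← pow_mul, ← pow_succ', ← pow_mul]; ring_nf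
      _ ≤ 2 ^ ((l + 1) * T ^ (n + 1)) := Nat.pow_le_pow_right two_pos (by
          have : T ≤ T ^ n * T := by rw [← pow_succ]; exact Nat.le_self_pow (by omega) T
          rw [pow_succ]; nlinarith)
  have : 1 ≤ 2 ^ ((l + 1) * T ^ (n + 1)) := Nat.one_le_two_pow
  calc minHomogeneousBound c (n + 1) m + 1 ≤ 2 ^ ((l + 1) * T ^ (n + 1) + 1) := by
        rw [pow_succ]; omega
    _ ≤ 2 ^ ((l + 2) * T ^ (n + 1)) := Nat.pow_le_pow_right two_pos (by nlinarith)

theorem mul_pow_le_two_pow {B T T' p q : ℕ} (hT : 1 ≤ T) (h : T' ≤ 2 ^ (B * T ^ q)) :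
    B * T' ^ p ≤ 2 ^ (B * (p + 1) * T ^ q) :=
  calc B * T' ^ p ≤ 2 ^ B * (2 ^ (B * T ^ q)) ^ p :=
        Nat.mul_le_mul Nat.lt_two_pow_self.le (Nat.pow_le_pow_left h p)
    _ = 2 ^ (B + B * T ^ q * p) := by rw [← pow_mul, ← pow_add]
    _ ≤ 2 ^ (B * (p + 1) * T ^ q) := Nat.pow_le_pow_right two_pos (by
        have : B ≤ B * T ^ q := Nat.le_mul_of_pos_right B (Nat.one_le_pow _ _ hT)
        nlinarith)

theorem minHomogeneousBound_le_tower {c l d m X : ℕ} (hc₀ : 1 ≤ c) (hc : c ≤ 2 ^ l)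
    (hd : 1 ≤ d) (hm : d + 2 ≤ m) (hX : (l + 2) * (d + 3) * (m + 1) ≤ X) :
    minHomogeneousBound c d m ≤ tower d X := by
  set B := l + 2
  set T : ℕ → ℕ := fun e => minHomogeneousBound c e m + 1
  have hT : ∀ e, d + 3 ≤ T e := fun e => by
    have := le_minHomogeneousBound hc₀ e m; show d + 3 ≤ minHomogeneousBound c e m + 1; omega
  have hstep : ∀ e, B * T (e + 1) ^ (d + 2) ≤ 2 ^ (B * (d + 3) * T e ^ (e + 1)) := fun e =>
    mul_pow_le_two_pow (by linarith [hT e]) (minHomogeneousBound_succ_add_one_le hc e m)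
  have key : ∀ e, 1 ≤ e → e ≤ d → B * T e ^ (d + 2) ≤ tower e X := by
    intro e he
    induction e, he using Nat.le_induction with
    | base =>
      intro _
      exact (hstep 0).trans
        (Nat.pow_le_pow_right two_pos (by simpa [T, minHomogeneousBound, tower] using hX))
    | succ e he ih =>
      intro hed
      have hexp : (d + 3) * T e ^ (e + 1) ≤ T e ^ (d + 2) :=
        calc (d + 3) * T e ^ (e + 1) ≤ T e * T e ^ (e + 1) := Nat.mul_le_mul_right _ (hT e)
          _ = T e ^ (e + 2) := by ring
          _ ≤ T e ^ (d + 2) := Nat.pow_le_pow_right (by linarith [hT e]) (by omega)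
      calc B * T (e + 1) ^ (d + 2) ≤ 2 ^ (B * (d + 3) * T e ^ (e + 1)) := hstep e
        _ ≤ 2 ^ (B * T e ^ (d + 2)) := Nat.pow_le_pow_right two_pos (by
            rw [mul_assoc]; exact Nat.mul_le_mul_left B hexp)
        _ ≤ tower (e + 1) X := Nat.pow_le_pow_right two_pos (ih (by omega))
  calc minHomogeneousBound c d m ≤ T d ^ (d + 2) :=
        (Nat.le_succ _).trans (Nat.le_self_pow (by omega) _)
    _ ≤ B * T d ^ (d + 2) := Nat.le_mul_of_pos_left _ (by omega)
    _ ≤ tower d X := key d hd le_rfl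

theorem mul_le_two_pow {A s t : ℕ} (hA : 2 * A ≤ 2 ^ s) (ht : 2 * s ≤ t) : A * t ≤ 2 ^ t :=
  calc A * t ≤ 2 * A * (t - s) := by
        have := Nat.mul_le_mul_left A (by omega : t ≤ 2 * (t - s)); linarith
    _ ≤ 2 ^ s * 2 ^ (t - s) := Nat.mul_le_mul hA Nat.lt_two_pow_self.le
    _ = 2 ^ t := by rw [← pow_add]; congr 1; omega

theorem exists_mul_log_add_le (A b : ℕ) : ∃ K, ∀ k, K ≤ k → A * (Nat.log 2 k + b) ≤ k := by
  set s := 2 * (A * (b + 1)) + 1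
  refine ⟨2 ^ (2 * s), fun k hk => ?_⟩
  have hk0 : k ≠ 0 := by have := Nat.one_le_two_pow (n := 2 * s); omega
  set t := Nat.log 2 k
  have ht : 2 * s ≤ t := Nat.le_log_of_pow_le one_lt_two hk
  have ht1 : 1 ≤ t := by have : 1 ≤ s := Nat.le_add_left 1 _; omega
  calc A * (t + b) ≤ A * (b + 1) * t := by
        rw [mul_assoc]; exact Nat.mul_le_mul_left A (by nlinarith)
    _ ≤ 2 ^ t := mul_le_two_pow (by have : s < 2 ^ s := Nat.lt_two_pow_self; omega) ht
    _ ≤ k := Nat.pow_log_le_self 2 hk0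

theorem exists_minHomogeneousBound_le_tower (d r : ℕ) (hd : 1 ≤ d) :
    ∃ K, ∀ k, K ≤ k →
      minHomogeneousBound ((k + 2) ^ r) d ((k + 2) ^ r + 1 + d) ≤ tower d (k ^ (r + 1)) := by
  obtain ⟨K, hK⟩ := exists_mul_log_add_le ((r + 1) * (d + 3) * (2 ^ r + d + 2)) 2
  refine ⟨max K 2, fun k hk => ?_⟩
  set t := Nat.log 2 k
  have hc₀ : 1 ≤ (k + 2) ^ r := Nat.one_le_pow _ _ (by omega)
  have hc : (k + 2) ^ r ≤ 2 ^ (r * (t + 2)) := by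
    have : k < 2 ^ (t + 1) := Nat.lt_pow_succ_log_self one_lt_two k
    rw [mul_comm, pow_mul]
    exact Nat.pow_le_pow_left (by rw [pow_succ]; omega) r
  refine minHomogeneousBound_le_tower hc₀ hc hd (by omega) ?_
  have hl : r * (t + 2) + 2 ≤ (r + 1) * (t + 2) := by nlinarith
  have hm : (k + 2) ^ r + 1 + d + 1 ≤ (2 ^ r + d + 2) * k ^ r := by
    have h2k : (k + 2) ^ r ≤ 2 ^ r * k ^ r := by
      rw [← mul_pow]; exact Nat.pow_le_pow_left (by omega) r
    have : d + 2 ≤ (d + 2) * k ^ r := Nat.le_mul_of_pos_right _ (Nat.one_le_pow _ _ (by omega))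
    nlinarith
  calc (r * (t + 2) + 2) * (d + 3) * ((k + 2) ^ r + 1 + d + 1)
      ≤ (r + 1) * (t + 2) * (d + 3) * ((2 ^ r + d + 2) * k ^ r) := by gcongr
    _ = (r + 1) * (d + 3) * (2 ^ r + d + 2) * (t + 2) * k ^ r := by ring
    _ ≤ k * k ^ r := Nat.mul_le_mul_right _ (hK k (by omega))
    _ = k ^ (r + 1) := by ring

theorem AR_constant_upper_bound_general (d r : ℕ) (hd : 1 ≤ d) :
    ∃ K, ∀ k, K ≤ k → ARnum (fun _ => k) (d+1) r ≤ tower d (k^(r+1)) := by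
  obtain ⟨K, hK⟩ := exists_minHomogeneousBound_le_tower d r hd
  refine ⟨K, fun k hk => Nat.sInf_le ?_⟩
  intro C hC
  set R := tower d (k ^ (r + 1))
  let C₀ : (Fin (d + 1) → ℕ) → (Fin r → Fin (k + 2)) := fun x j => Fin.clamp (C x j) (k + 1)
  obtain ⟨S, hSL, hSm, hS⟩ := exists_minHomogeneousOn C₀ ((k + 2) ^ r + 1 + d)
    (L := range (R + 1)) (by simpa using (hK k hk).trans R.le_succ)
  obtain ⟨x, hx, hxS, hxC⟩ := hS.exists_init_eq_tail (by simpa using hSm)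
  have hxR : ∀ i, x i ≤ R := fun i => Nat.lt_succ_iff.1 (mem_range.1 (hSL (hxS i)))
  refine ⟨x, hx, hxR _, fun j => le_of_eq ?_⟩
  have hinit : C (Fin.init x) j ≤ k + 1 := hC _ (fun i => hxR _) j
  have htail : C (Fin.tail x) j ≤ k + 1 := hC _ (fun i => hxR _) j
  have := congrArg (fun c => (c j : ℕ)) hxC
  simp only [C₀, Fin.coe_clamp] at this
  change C (Fin.init x) j = C (Fin.tail x) j
  omega

/-- Erdős–Rado upper bounds for the adjacent Ramsey function with constant parameter:
`AR_k^{d+1}(r) ≤ 2_d(k^{r+1})` for all sufficiently large `k`. -/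
theorem AR_constant_upper_bound (d r : ℕ) (hd : 1 ≤ d) (hr : 1 ≤ r) :
    ∃ K, ∀ k, K ≤ k → ARnum (fun _ => k) (d+1) r ≤ tower d (k^(r+1)) :=
  AR_constant_upper_bound_general d r hd
end

section
/- For all d ≥ 2, a ≥ 0, m ≥ 1 and all k ≥ a + d^2·m + 2: KM^d_k(a,m) ≤ 2_{d-2}(k^{d^2·m}) + a ≤ 2_{d-2}(k^{d^2·m+2}). -/
/-- `KMProp f d a m R` : every `f`-regressive colouring of the `d`-element subsets of
`{a,…,R}` admits a min-homogeneous `H ⊆ {a,…,R}` of size `m`. -/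
def KMProp (f : ℕ → ℕ) (d a m R : ℕ) : Prop :=
  ∀ C : Finset ℕ → ℕ,
    (∀ s ⊆ Finset.Icc a R, s.card = d → C s ≤ f (sInf (s : Set ℕ))) →
    ∃ H : Finset ℕ, H ⊆ Finset.Icc a R ∧ H.card = m ∧
      ∀ s ⊆ H, ∀ t ⊆ H, s.card = d → t.card = d →
        sInf (s : Set ℕ) = sInf (t : Set ℕ) → C s = C t

/-- `KMnum f d a m` : the least `R` witnessing the Kanamori–McAloon theorem `KM_f^d(a,m)`. -/
noncomputable def KMnum (f : ℕ → ℕ) (d a m : ℕ) : ℕ := sInf {R | KMProp f d a m R}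

/-!
An Erdős–Rado argument. For a colouring of `(e + 1)`-sets with colours `≤ c`, choose elements greedily
from the bottom; after choosing `x₀`, pigeonhole keeps only the later `y` on which the colours of
all `s ∪ {y}` with `x₀ ∈ s` agree. This yields an end-homogeneous set `T` (the colour of `s ∪ {x}`,
`x > max s`, depends only on `s`). Deleting the top element `t` of `T` and colouring `e`-sets by
`s ↦ C (s ∪ {t})` reduces min-homogeneity in dimension `e + 1` to dimension `e`. Each dimension
costs one exponential, `endHomBound c e 0 n ≤ (2 (c + 1)) ^ n ^ e`, which gives the tower.
-/

open Finset

/-- A reservoir of this size above an end-homogeneous prefix of `p` elements yields `n` more: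
one element is taken and the rest is split into `(c + 1) ^ p.choose (e - 1)` colour classes. -/
def endHomBound (c e : ℕ) : ℕ → ℕ → ℕ
  | _, 0 => 0
  | p, n + 1 => 1 + (c + 1) ^ p.choose (e - 1) * endHomBound c e (p + 1) n

def IsEndHomogeneous (C : Finset ℕ → ℕ) (e : ℕ) (P Q : Finset ℕ) : Prop :=
  ∀ s ⊆ P, s.card = e → ∀ x ∈ Q, ∀ y ∈ Q, (∀ u ∈ s, u < x) → (∀ u ∈ s, u < y) →
    C (insert x s) = C (insert y s)

def IsMinHomogeneous (C : Finset ℕ → ℕ) (d : ℕ) (H : Finset ℕ) : Prop :=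
  ∀ s ⊆ H, ∀ t ⊆ H, s.card = d → t.card = d → sInf (s : Set ℕ) = sInf (t : Set ℕ) → C s = C t

section EndHomogeneous

variable {C : Finset ℕ → ℕ} {c e : ℕ}

theorem IsEndHomogeneous.mono {P Q P' Q' : Finset ℕ} (h : IsEndHomogeneous C e P Q)
    (hP : P' ⊆ P) (hQ : Q' ⊆ Q) : IsEndHomogeneous C e P' Q' :=
  fun s hs hse x hx y hy => h s (hs.trans hP) hse x (hQ hx) y (hQ hy)

theorem exists_isEndHomogeneous_insert (he : 1 ≤ e) {P A : Finset ℕ} {x₀ n : ℕ}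
    (hC : ∀ s ⊆ P ∪ A, s.card = e + 1 → C s ≤ c) (hPA : ∀ p ∈ P, ∀ y ∈ A, p < y)
    (hx₀ : x₀ ∈ A) (hhom : IsEndHomogeneous C e P (P ∪ A))
    (hn : (c + 1) ^ P.card.choose (e - 1) * n ≤ (A.erase x₀).card) :
    ∃ A' ⊆ A.erase x₀, n ≤ A'.card ∧ IsEndHomogeneous C e (insert x₀ P) (insert x₀ P ∪ A') := by
  have hx₀P : x₀ ∉ P := fun h => (hPA x₀ h x₀ hx₀).false
  set S := P.powersetCard (e - 1)
  let colours : ℕ → S → ℕ := fun y s => C (insert y (insert x₀ s.1))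
  have hmaps : ∀ y ∈ A.erase x₀, colours y ∈ Fintype.piFinset fun _ : S => range (c + 1) := by
    intro y hy
    rw [Fintype.mem_piFinset]
    rintro ⟨s, hs⟩
    obtain ⟨hyx₀, hyA⟩ := mem_erase.1 hy
    obtain ⟨hsP, hs⟩ := mem_powersetCard.1 hs
    refine mem_range_succ_iff.2 (hC _ ?_ ?_)
    · exact insert_subset (mem_union_right _ hyA) <|
        insert_subset (mem_union_right _ hx₀) (hsP.trans subset_union_left)
    · have hy : y ∉ insert x₀ s := by
        simpa [hyx₀] using fun h => (hPA y (hsP h) y hyA).false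
      rw [card_insert_of_notMem hy, card_insert_of_notMem fun h => hx₀P (hsP h), hs]
      omega
  obtain ⟨v, -, hv⟩ := exists_le_card_fiber_of_mul_le_card_of_maps_to hmaps
    ⟨fun _ => 0, by simp⟩ (by simpa [S] using hn)
  refine ⟨{y ∈ A.erase x₀ | colours y = v}, filter_subset _ _, hv, ?_⟩
  intro s hs hse x hx y hy hxs hys
  by_cases hx₀s : x₀ ∈ s
  · have above : ∀ z ∈ insert x₀ P ∪ {y ∈ A.erase x₀ | colours y = v}, (∀ u ∈ s, u < z) →
        colours z = v := by
      intro z hz hzs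
      have hx₀z := hzs x₀ hx₀s
      rcases mem_union.1 hz with hz | hz
      · rcases mem_insert.1 hz with rfl | hz
        · exact absurd hx₀z (lt_irrefl _)
        · exact absurd (hPA z hz x₀ hx₀) hx₀z.not_gt
      · exact (mem_filter.1 hz).2
    have hsS : s.erase x₀ ∈ S := mem_powersetCard.2
      ⟨(subset_insert_iff.1 hs), by rw [card_erase_of_mem hx₀s, hse]⟩
    have := congrFun ((above x hx hxs).trans (above y hy hys).symm) ⟨_, hsS⟩
    simpa only [colours, insert_erase hx₀s] using this
  · have hQ : insert x₀ P ∪ {y ∈ A.erase x₀ | colours y = v} ⊆ P ∪ A := by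
      refine union_subset (insert_subset (mem_union_right _ hx₀) subset_union_left) ?_
      exact (filter_subset _ _).trans ((erase_subset _ _).trans subset_union_right)
    exact hhom s ((subset_insert_iff_of_notMem hx₀s).1 hs) hse x (hQ hx) y (hQ hy) hxs hys

theorem exists_isEndHomogeneous_of_endHomBound_le (he : 1 ≤ e) :
    ∀ (n : ℕ) {P A : Finset ℕ}, (∀ s ⊆ P ∪ A, s.card = e + 1 → C s ≤ c) →
      (∀ p ∈ P, ∀ y ∈ A, p < y) → IsEndHomogeneous C e P (P ∪ A) →
      endHomBound c e P.card n ≤ A.card →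
      ∃ T ⊆ A, T.card = n ∧ IsEndHomogeneous C e (P ∪ T) (P ∪ T)
  | 0, _, _, _, _, hhom, _ => ⟨∅, empty_subset _, rfl, hhom.mono (by simp) (by simp)⟩
  | n + 1, P, A, hC, hPA, hhom, hA => by
    have hA0 : A.Nonempty := card_pos.1 (lt_of_lt_of_le (by simp [endHomBound]) hA)
    set x₀ := A.min' hA0
    have hx₀ : x₀ ∈ A := min'_mem A hA0
    have hx₀P : x₀ ∉ P := fun h => (hPA x₀ h x₀ hx₀).false
    obtain ⟨A', hA'A, hA'card, hA'⟩ := exists_isEndHomogeneous_insert he hC hPA hx₀ hhom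
      (n := endHomBound c e (P.card + 1) n)
      (by rw [card_erase_of_mem hx₀]; simp only [endHomBound] at hA; omega)
    have hx₀A' : ∀ y ∈ A', x₀ < y := fun y hy =>
      (min'_le A y (mem_of_mem_erase (hA'A hy))).lt_of_ne (ne_of_mem_erase (hA'A hy)).symm
    have hA'A : A' ⊆ A := hA'A.trans (erase_subset _ _)
    obtain ⟨T, hTA', rfl, hT⟩ := exists_isEndHomogeneous_of_endHomBound_le he n
      (P := insert x₀ P) (A := A')
      (fun s hs => hC s <| hs.trans <| union_subset
        (insert_subset (mem_union_right _ hx₀) subset_union_left) (hA'A.trans subset_union_right))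
      (by
        simp only [mem_insert, forall_eq_or_imp]
        exact ⟨hx₀A', fun p hp y hy => hPA p hp y (hA'A hy)⟩)
      hA' (by rwa [card_insert_of_notMem hx₀P])
    refine ⟨insert x₀ T, insert_subset hx₀ (hTA'.trans hA'A),
      card_insert_of_notMem fun h => (hx₀A' x₀ (hTA' h)).false, ?_⟩
    rwa [union_insert, ← insert_union]

end EndHomogeneous

def minHomBound (c m : ℕ) : ℕ → ℕ
  | 0 => m
  | 1 => m
  | d + 2 => endHomBound c (d + 1) 0 (minHomBound c m (d + 1) + 1)

theorem minHomBound_succ (c m : ℕ) {d : ℕ} (hd : 1 ≤ d) :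
    minHomBound c m (d + 1) = endHomBound c d 0 (minHomBound c m d + 1) := by
  obtain ⟨d, rfl⟩ := Nat.exists_eq_add_of_le' hd
  rfl

section MinHomogeneous

variable {C : Finset ℕ → ℕ}

theorem sInf_coe_erase_of_lt {s : Finset ℕ} {x y : ℕ} (hy : y ∈ s) (hyx : y < x) :
    sInf ((s.erase x : Finset ℕ) : Set ℕ) = sInf (s : Set ℕ) := by
  have hmin : sInf (s : Set ℕ) ∈ s.erase x :=
    mem_erase.2 ⟨((Nat.sInf_le hy).trans_lt hyx).ne, Nat.sInf_mem ⟨y, hy⟩⟩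
  exact le_antisymm (Nat.sInf_le hmin) (Nat.sInf_le (erase_subset _ _ (Nat.sInf_mem ⟨_, hmin⟩)))

theorem isMinHomogeneous_one (H : Finset ℕ) : IsMinHomogeneous C 1 H := by
  intro s _ t _ hs ht hst
  obtain ⟨x, rfl⟩ := card_eq_one.1 hs
  obtain ⟨y, rfl⟩ := card_eq_one.1 ht
  simp only [coe_singleton, csInf_singleton] at hst
  rw [hst]

theorem IsMinHomogeneous.of_insert {d top : ℕ} {T H : Finset ℕ} (hd : 1 ≤ d)
    (hT : IsEndHomogeneous C d T T) (htop : top ∈ T) (hHT : H ⊆ T) (hHtop : ∀ u ∈ H, u < top)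
    (hH : IsMinHomogeneous (fun u => C (insert top u)) d H) : IsMinHomogeneous C (d + 1) H := by
  have key : ∀ s ⊆ H, s.card = d + 1 → ∃ s₀ ⊆ H, s₀.card = d ∧
      C s = C (insert top s₀) ∧ sInf (s₀ : Set ℕ) = sInf (s : Set ℕ) := by
    intro s hsH hs
    have hne : s.Nonempty := card_pos.1 (by omega)
    have hM := max'_mem s hne
    have hs₀ : (s.erase (s.max' hne)).card = d := by rw [card_erase_of_mem hM, hs]; rfl
    refine ⟨s.erase (s.max' hne), (erase_subset _ _).trans hsH, hs₀, ?_, ?_⟩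
    · conv_lhs => rw [← insert_erase hM]
      exact hT _ ((erase_subset _ _).trans (hsH.trans hHT)) hs₀ _ (hHT (hsH hM)) top htop
        (fun u hu => lt_max'_of_mem_erase_max' s hne hu)
        (fun u hu => hHtop u (hsH (mem_of_mem_erase hu)))
    · exact sInf_coe_erase_of_lt (min'_mem s hne) (min'_lt_max'_of_card s (by omega))
  intro s hs t ht hsc htc hst
  obtain ⟨s₀, hs₀, hs₀c, hCs, hIs⟩ := key s hs hsc
  obtain ⟨t₀, ht₀, ht₀c, hCt, hIt⟩ := key t ht htc
  rw [hCs, hCt]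
  exact hH s₀ hs₀ t₀ ht₀ hs₀c ht₀c (by rw [hIs, hIt, hst])

theorem exists_isMinHomogeneous_of_minHomBound_le {c m d : ℕ} (hd : 1 ≤ d) {W : Finset ℕ}
    (hC : ∀ s ⊆ W, s.card = d → C s ≤ c) (hW : minHomBound c m d ≤ W.card) :
    ∃ H ⊆ W, H.card = m ∧ IsMinHomogeneous C d H := by
  induction d, hd using Nat.le_induction generalizing W C with
  | base =>
    obtain ⟨H, hHW, hH⟩ := exists_subset_card_eq (show m ≤ W.card from hW)
    exact ⟨H, hHW, hH, isMinHomogeneous_one H⟩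
  | succ d hd ih =>
    rw [minHomBound_succ c m hd] at hW
    obtain ⟨T, hTW, hTcard, hT⟩ := exists_isEndHomogeneous_of_endHomBound_le hd _
      (P := ∅) (A := W) (by simpa using hC) (by simp)
      (fun s hs hsd => by simp [subset_empty.1 hs] at hsd; omega) (by simpa using hW)
    rw [empty_union] at hT
    have hTne : T.Nonempty := card_pos.1 (by omega)
    have htop := max'_mem T hTne
    have hbelow : ∀ u ∈ T.erase (T.max' hTne), u < T.max' hTne :=
      fun u hu => lt_max'_of_mem_erase_max' T hTne hu
    obtain ⟨H, hHT, hHcard, hH⟩ := ih (W := T.erase (T.max' hTne))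
      (C := fun u => C (insert (T.max' hTne) u))
      (fun u hu hud => hC _ (insert_subset (hTW htop) (hu.trans ((erase_subset _ _).trans hTW)))
        (by rw [card_insert_of_notMem fun h => (hbelow _ (hu h)).false, hud]))
      (by rw [card_erase_of_mem htop, hTcard]; rfl)
    exact ⟨H, hHT.trans ((erase_subset _ _).trans hTW), hHcard,
      hH.of_insert hd hT htop (hHT.trans (erase_subset _ _)) fun u hu => hbelow u (hHT hu)⟩

end MinHomogeneous

theorem endHomBound_le (c e : ℕ) :
    ∀ n p, endHomBound c e p n ≤ (2 * (c + 1)) ^ (n * (p + n) ^ (e - 1))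
  | 0, p => by simp [endHomBound]
  | n + 1, p => by
    set E := (p + (n + 1)) ^ (e - 1)
    have hE : 1 ≤ E := Nat.one_le_pow _ _ (by omega)
    have hchoose : p.choose (e - 1) ≤ E :=
      (Nat.choose_le_pow _ _).trans (Nat.pow_le_pow_left (by omega) _)
    have ih : endHomBound c e (p + 1) n ≤ (2 * (c + 1)) ^ (n * E) := by
      simpa only [E, add_assoc, add_comm 1 n] using endHomBound_le c e n (p + 1)
    calc endHomBound c e p (n + 1)
        = 1 + (c + 1) ^ p.choose (e - 1) * endHomBound c e (p + 1) n := rfl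
      _ ≤ 2 * ((c + 1) ^ E * (2 * (c + 1)) ^ (n * E)) := by
        have := Nat.mul_le_mul (Nat.pow_le_pow_right (by omega : 0 < c + 1) hchoose) ih
        have : 0 < (c + 1) ^ E * (2 * (c + 1)) ^ (n * E) := by positivity
        omega
      _ ≤ 2 ^ E * ((c + 1) ^ E * (2 * (c + 1)) ^ (n * E)) := by
        gcongr
        exact Nat.le_self_pow (by omega) 2
      _ = (2 * (c + 1)) ^ ((n + 1) * E) := by
        rw [add_one_mul, pow_add, mul_pow 2 (c + 1) E]
        ring

theorem endHomBound_one (c : ℕ) : ∀ n p, c * endHomBound c 1 p n + 1 = (c + 1) ^ n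
  | 0, _ => rfl
  | n + 1, p => by
    rw [pow_succ, ← endHomBound_one c n (p + 1)]
    simp only [endHomBound, Nat.sub_self, Nat.choose_zero_right, pow_one]
    ring

theorem minHomBound_two_lt (m : ℕ) {k : ℕ} (hk : 2 ≤ k) :
    minHomBound k m 2 < k ^ (2 * m + 1) := by
  have h := endHomBound_one k (m + 1) 0
  have : (k + 1) ^ (m + 1) ≤ (k ^ 2) ^ (m + 1) := Nat.pow_le_pow_left (by nlinarith) _
  refine Nat.lt_of_mul_lt_mul_left (a := k) ?_
  calc k * minHomBound k m 2 < (k + 1) ^ (m + 1) := by rw [← h]; exact Nat.lt_succ_self _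
    _ ≤ k * k ^ (2 * m + 1) := this.trans_eq (by ring)

theorem minHomBound_succ_le_two_pow {k m d : ℕ} (hk : 1 ≤ k) (hd : 1 ≤ d) :
    minHomBound k m (d + 1) ≤ 2 ^ (2 * k * (minHomBound k m d + 1) ^ d) := by
  set n := minHomBound k m d + 1
  have hbase : 2 * (k + 1) ≤ 2 ^ (2 * k) := by
    rw [two_mul k, pow_add]
    exact Nat.mul_le_mul (Nat.le_self_pow (by omega) 2) k.lt_two_pow_self
  calc minHomBound k m (d + 1) ≤ (2 * (k + 1)) ^ (n * (0 + n) ^ (d - 1)) := by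
        rw [minHomBound_succ k m hd]; exact endHomBound_le k d n 0
    _ = (2 * (k + 1)) ^ n ^ d := by rw [zero_add, ← pow_succ', Nat.sub_add_cancel hd]
    _ ≤ (2 ^ (2 * k)) ^ n ^ d := Nat.pow_le_pow_left hbase _
    _ = 2 ^ (2 * k * n ^ d) := by rw [← pow_mul]

theorem tower_add_le_tower {K x y : ℕ} (hxy : x + K ≤ y) : ∀ h, tower h x + K ≤ tower h y
  | 0 => hxy
  | h + 1 => by
    have ih := tower_add_le_tower hxy h
    calc 2 ^ tower h x + K ≤ 2 ^ tower h x * (K + 1) := by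
          nlinarith [Nat.one_le_two_pow (n := tower h x)]
      _ ≤ 2 ^ tower h x * 2 ^ K := Nat.mul_le_mul_left _ K.lt_two_pow_self
      _ = 2 ^ (tower h x + K) := (pow_add ..).symm
      _ ≤ 2 ^ tower h y := Nat.pow_le_pow_right two_pos ih

theorem mul_tower_add_le_tower {K x y : ℕ} (hK : 1 ≤ K) (hxy : K * x + K ≤ y) (h : ℕ) :
    K * tower h x + K ≤ tower h y := by
  cases h with
  | zero => exact hxy
  | succ h =>
    have hx : tower h x + K ≤ tower h y := tower_add_le_tower (by nlinarith) h
    have h2K : 2 * K ≤ 2 ^ K := by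
      obtain ⟨j, rfl⟩ := Nat.exists_eq_add_of_le' hK
      rw [pow_succ]
      linarith [j.lt_two_pow_self]
    calc K * 2 ^ tower h x + K ≤ 2 * K * 2 ^ tower h x := by
          nlinarith [Nat.one_le_two_pow (n := tower h x)]
      _ ≤ 2 ^ K * 2 ^ tower h x := Nat.mul_le_mul_right _ h2K
      _ = 2 ^ (tower h x + K) := by rw [pow_add, mul_comm]
      _ ≤ 2 ^ tower h y := Nat.pow_le_pow_right two_pos hx

theorem minHomBound_three_le {k m : ℕ} (hk : 2 ≤ k) (hm : 1 ≤ m) :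
    minHomBound k m 3 ≤ tower 1 (k ^ (3 ^ 2 * m)) := by
  have hn : minHomBound k m 2 + 1 ≤ k ^ (2 * m + 1) := minHomBound_two_lt m hk
  calc minHomBound k m 3 ≤ 2 ^ (2 * k * (minHomBound k m 2 + 1) ^ 2) :=
        minHomBound_succ_le_two_pow (by omega) (by norm_num)
    _ ≤ 2 ^ (k ^ (3 ^ 2 * m)) := by
      apply Nat.pow_le_pow_right two_pos
      calc 2 * k * (minHomBound k m 2 + 1) ^ 2 ≤ k * k * (k ^ (2 * m + 1)) ^ 2 := by gcongr
        _ = k ^ (4 * m + 4) := by ring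
        _ ≤ k ^ (3 ^ 2 * m) := Nat.pow_le_pow_right (by omega) (by omega)

theorem minHomBound_succ_le_tower {k m h : ℕ} (hm : 1 ≤ m) (hk : h + 4 ≤ k)
    (ih : minHomBound k m (h + 3) ≤ tower (h + 1) (k ^ ((h + 3) ^ 2 * m))) :
    minHomBound k m (h + 4) ≤ tower (h + 2) (k ^ ((h + 4) ^ 2 * m)) := by
  set x := k ^ ((h + 3) ^ 2 * m)
  set y := k ^ ((h + 4) ^ 2 * m)
  set t := tower h x
  have hn : minHomBound k m (h + 3) + 1 ≤ 2 ^ (t + 1) := by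
    have : minHomBound k m (h + 3) ≤ 2 ^ t := ih
    rw [pow_succ]
    linarith [Nat.one_le_two_pow (n := t)]
  have hxy : (k + h + 4) * x + (k + h + 4) ≤ y := by
    have hx : 1 ≤ x := Nat.one_le_pow _ _ (by omega)
    have hK : k + h + 4 ≤ 2 * k := by omega
    calc (k + h + 4) * x + (k + h + 4) ≤ 4 * (k * x) := by nlinarith
      _ ≤ k * k * (k * x) := Nat.mul_le_mul_right _ (by nlinarith)
      _ = k ^ ((h + 3) ^ 2 * m + 3) := by ring
      _ ≤ y := Nat.pow_le_pow_right (by omega) (by nlinarith)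
  have hty := mul_tower_add_le_tower (by omega) hxy h
  calc minHomBound k m (h + 4) ≤ 2 ^ (2 * k * (minHomBound k m (h + 3) + 1) ^ (h + 3)) :=
        minHomBound_succ_le_two_pow (by omega) (by omega)
    _ ≤ 2 ^ (2 ^ tower h y) := by
      apply Nat.pow_le_pow_right two_pos
      calc 2 * k * (minHomBound k m (h + 3) + 1) ^ (h + 3)
          ≤ 2 ^ (k + 1) * (2 ^ (t + 1)) ^ (h + 3) := by
            gcongr
            rw [pow_succ']
            exact Nat.mul_le_mul_left 2 k.lt_two_pow_self.le
        _ = 2 ^ (k + 1 + (t + 1) * (h + 3)) := by rw [← pow_mul, ← pow_add]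
        _ ≤ 2 ^ tower h y := Nat.pow_le_pow_right two_pos (by nlinarith)

theorem minHomBound_le_tower {k m d : ℕ} (hm : 1 ≤ m) (hd : 2 ≤ d) (hk : d ^ 2 * m + 2 ≤ k) :
    minHomBound k m d ≤ tower (d - 2) (k ^ (d ^ 2 * m)) := by
  rcases Nat.lt_or_ge d 3 with hd3 | hd3
  · obtain rfl : d = 2 := by omega
    exact (minHomBound_two_lt m (by omega)).le.trans (Nat.pow_le_pow_right (by omega) (by omega))
  clear hd
  induction d, hd3 using Nat.le_induction with
  | base => exact minHomBound_three_le (by omega) hm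
  | succ d hd ih =>
    obtain ⟨h, rfl⟩ := Nat.exists_eq_add_of_le' hd
    exact minHomBound_succ_le_tower hm (by nlinarith) (ih (by nlinarith))

/-- Upper bounds for the Kanamori–McAloon function with constant parameter:
`KM^d_k(a,m) ≤ 2_{d-2}(k^{d²·m}) + a ≤ 2_{d-2}(k^{d²·m+2})` for `k ≥ a + d²·m + 2`. -/
theorem KM_constant_upper_bound (d a m k : ℕ) (hd : 2 ≤ d) (hm : 1 ≤ m)
    (hk : a + d^2 * m + 2 ≤ k) :
    KMnum (fun _ => k) d a m ≤ tower (d-2) (k^(d^2 * m)) + a ∧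
    tower (d-2) (k^(d^2 * m)) + a ≤ tower (d-2) (k^(d^2 * m + 2)) := by
  constructor
  · refine Nat.sInf_le fun C hC => ?_
    have hW : minHomBound k m d ≤ (Icc a (tower (d - 2) (k ^ (d ^ 2 * m)) + a)).card := by
      have := minHomBound_le_tower (k := k) hm hd (by omega)
      rw [Nat.card_Icc]
      omega
    exact exists_isMinHomogeneous_of_minHomBound_le (by omega) hC hW
  · refine tower_add_le_tower ?_ (d - 2)
    have hx : 1 ≤ k ^ (d ^ 2 * m) := Nat.one_le_pow _ _ (by omega)
    have hk2 : 1 + k ≤ k * k := by nlinarith [show 2 ≤ k by omega]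
    calc k ^ (d ^ 2 * m) + a ≤ (1 + k) * k ^ (d ^ 2 * m) := by nlinarith
      _ ≤ k * k * k ^ (d ^ 2 * m) := Nat.mul_le_mul_right _ hk2
      _ = k ^ (d ^ 2 * m + 2) := by ring
end
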